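/- arXiv:1812.05125 — 11 statements merged into one kernel-verified Lean document; each statement's English description precedes it below -/
import Mathlib

section
/- For any graph G with vertex cover number mvc(G), the eternal vertex cover number evc(G) satisfies mvc(G) ≤ evc(G) ≤ 2·mvc(G). -/
namespace EVC

open SimpleGraph

variable {V : Type*}

/-- `S` is a vertex cover of `G`. -/
def IsVC (G : SimpleGraph V) (S : Set V) : Prop :=
  ∀ ⦃u v : V⦄, G.Adj u v → u ∈ S ∨ v ∈ S

/-- The minimum vertex cover number of `G`. -/
noncomputable def mvc (G : SimpleGraph V) : ℕ :=
  sInf {k | ∃ S : Set V, IsVC G S ∧ S.ncard = k}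

/-- The minimum size of a vertex cover of `G` containing all vertices of `U`. -/
noncomputable def mvcOn (G : SimpleGraph V) (U : Set V) : ℕ :=
  sInf {k | ∃ S : Set V, IsVC G S ∧ U ⊆ S ∧ S.ncard = k}

/-- Configuration `S'` is obtained from configuration `S` by a legal move of the guards
defending an attack on the edge `uv`: each guard stays or moves to an adjacent vertex
(at most one guard per vertex), and some guard moves across the attacked edge `uv`. -/
def Defends (G : SimpleGraph V) (S S' : Set V) (u v : V) : Prop :=
  ∃ f : V → V, Set.BijOn f S S' ∧ (∀ w ∈ S, f w = w ∨ G.Adj w (f w)) ∧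
    ((u ∈ S ∧ f u = v) ∨ (v ∈ S ∧ f v = u))

/-- `C` is an eternal vertex cover class of `G` with `k` guards, each configuration being a
vertex cover of size `k` containing `U`: from each configuration, every attack on an edge
can be defended by a legal move to another configuration in `C`. -/
def IsEvcClassOn (G : SimpleGraph V) (U : Set V) (k : ℕ) (C : Set (Set V)) : Prop :=
  C.Nonempty ∧ (∀ S ∈ C, IsVC G S ∧ U ⊆ S ∧ S.ncard = k) ∧
    ∀ S ∈ C, ∀ u v : V, G.Adj u v → ∃ S' ∈ C, Defends G S S' u v

/-- An eternal vertex cover class with no constraint on occupied vertices. -/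
def IsEvcClass (G : SimpleGraph V) (k : ℕ) (C : Set (Set V)) : Prop :=
  IsEvcClassOn G ∅ k C

/-- `evc_U(G)` : the minimum `k` admitting an eternal vertex cover class all of whose
configurations contain `U`. -/
noncomputable def evcOn (G : SimpleGraph V) (U : Set V) : ℕ :=
  sInf {k | ∃ C : Set (Set V), IsEvcClassOn G U k C}

/-- The eternal vertex cover number of `G`. -/
noncomputable def evc (G : SimpleGraph V) : ℕ := evcOn G ∅

/-- `x` is a cut vertex of the connected graph `G`. -/
def IsCutVertex (G : SimpleGraph V) (x : V) : Prop :=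
  G.Connected ∧ ¬ (G.induce {v : V | v ≠ x}).Connected

/-- The set of cut vertices of `G`. -/
def cutVertices (G : SimpleGraph V) : Set V := {x | IsCutVertex G x}

/-- `G` is locally connected: every open neighborhood induces a connected subgraph. -/
def LocallyConnected (G : SimpleGraph V) : Prop :=
  ∀ v : V, (G.induce (G.neighborSet v)).Connected

end EVC

open EVC SimpleGraph

section Aux
variable {V : Type*} [Finite V] (G : SimpleGraph V)

/-- `(T, m)` is a matching: `m` pairs up vertices of `T` along edges. -/
def AuxMP (T : Set V) (m : V → V) : Prop :=
  ∀ x ∈ T, m x ∈ T ∧ m (m x) = x ∧ m x ≠ x ∧ G.Adj x (m x)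

def auxMset : Set ℕ := {n | ∃ (T : Set V) (m : V → V), AuxMP G T m ∧ T.ncard = n}

noncomputable def auxNu : ℕ := sSup (auxMset G)

lemma auxMset_nonempty : (auxMset G).Nonempty :=
  ⟨0, ∅, id, fun x hx => absurd hx (Set.notMem_empty x), Set.ncard_empty V⟩

lemma auxMset_bdd : BddAbove (auxMset G) := by
  refine ⟨Nat.card V, fun n hn => ?_⟩
  obtain ⟨T, m, _, hT⟩ := hn
  rw [← hT, ← Set.ncard_univ]
  exact Set.ncard_le_ncard (Set.subset_univ T)

lemma auxNu_mem : auxNu G ∈ auxMset G :=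
  Nat.sSup_mem (auxMset_nonempty G) (auxMset_bdd G)

lemma aux_isVC {T : Set V} {m : V → V} (hm : AuxMP G T m) (hT : T.ncard = auxNu G) :
    IsVC G T := by
  classical
  intro x y hxy
  by_contra hc
  push_neg at hc
  obtain ⟨hx, hy⟩ := hc
  have hne : x ≠ y := hxy.ne
  set T' := insert x (insert y T) with hT'
  set m' := fun w => if w = x then y else if w = y then x else m w with hm'
  have hMP : AuxMP G T' m' := by
    intro w hw
    rcases hw with rfl | rfl | hwT
    · refine ⟨?_, ?_, ?_, ?_⟩
      · simp [hm', hT']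
      · simp [hm', hne, hne.symm]
      · simp [hm', hne.symm]
      · simpa [hm'] using hxy
    · refine ⟨?_, ?_, ?_, ?_⟩
      · simp [hm', hne, hT']
      · simp [hm', hne, hne.symm]
      · simp [hm', hne, hne.symm]
      · simpa [hm', hne, hne.symm] using hxy.symm
    · have hwx : w ≠ x := fun h => hx (h ▸ hwT)
      have hwy : w ≠ y := fun h => hy (h ▸ hwT)
      obtain ⟨h1, h2, h3, h4⟩ := hm w hwT
      have hmx : m w ≠ x := fun h => hx (h ▸ h1)
      have hmy : m w ≠ y := fun h => hy (h ▸ h1)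
      refine ⟨?_, ?_, ?_, ?_⟩
      · simp only [hm', if_neg hwx, if_neg hwy, hT']
        exact Set.mem_insert_of_mem _ (Set.mem_insert_of_mem _ h1)
      · simp only [hm', if_neg hwx, if_neg hwy, if_neg hmx, if_neg hmy]; exact h2
      · simp only [hm', if_neg hwx, if_neg hwy]; exact h3
      · simp only [hm', if_neg hwx, if_neg hwy]; exact h4
  have hcard : T'.ncard = auxNu G + 2 := by
    have hxny : x ∉ insert y T := by simp [hne, hx]
    rw [hT', Set.ncard_insert_of_notMem hxny, Set.ncard_insert_of_notMem hy, hT]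
  have : auxNu G + 2 ≤ auxNu G :=
    le_csSup (auxMset_bdd G) ⟨T', m', hMP, hcard⟩
  omega

lemma mvc_mem : ∃ S : Set V, IsVC G S ∧ S.ncard = mvc G := by
  have hne : {k | ∃ S : Set V, IsVC G S ∧ S.ncard = k}.Nonempty :=
    ⟨(Set.univ : Set V).ncard, Set.univ, fun u v _ => Or.inl (Set.mem_univ u), rfl⟩
  exact Nat.sInf_mem hne

lemma auxNu_le : auxNu G ≤ 2 * mvc G := by
  obtain ⟨S, hS, hScard⟩ := mvc_mem G
  obtain ⟨T, m, hm, hT⟩ := auxNu_mem G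
  have hsub : T ⊆ (S ∩ T) ∪ (m '' (S ∩ T)) := by
    intro x hx
    obtain ⟨h1, h2, _, h4⟩ := hm x hx
    rcases hS h4 with h | h
    · exact Or.inl ⟨h, hx⟩
    · exact Or.inr ⟨m x, ⟨h, h1⟩, h2⟩
  calc auxNu G = T.ncard := hT.symm
    _ ≤ ((S ∩ T) ∪ (m '' (S ∩ T))).ncard := Set.ncard_le_ncard hsub
    _ ≤ (S ∩ T).ncard + (m '' (S ∩ T)).ncard := Set.ncard_union_le _ _
    _ ≤ (S ∩ T).ncard + (S ∩ T).ncard := by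
        exact Nat.add_le_add_left (Set.ncard_image_le) _
    _ ≤ S.ncard + S.ncard := by
        have := Set.ncard_le_ncard (Set.inter_subset_left (s := S) (t := T))
        omega
    _ = 2 * mvc G := by rw [hScard]; ring

/-- The key defense step: attack on `uv` with `u` occupied, `v` not. -/
lemma aux_defend {T : Set V} {m : V → V} (hm : AuxMP G T m) {u v : V}
    (huv : G.Adj u v) (hu : u ∈ T) (hv : v ∉ T) :
    ∃ (T' : Set V) (m' : V → V), AuxMP G T' m' ∧ T'.ncard = T.ncard ∧
      Defends G T T' u v := by
  classical
  obtain ⟨hu'T, hinv, hne, hadj⟩ := hm u hu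
  set u' := m u with hu'
  have huvne : u ≠ v := huv.ne
  have hvu' : v ≠ u' := fun h => hv (h ▸ hu'T)
  set T' := insert v (T \ {u'}) with hT'
  refine ⟨T', fun w => if w = u then v else if w = v then u else m w, ?_, ?_, ?_⟩
  · -- AuxMP
    intro w hw
    rcases hw with rfl | ⟨hwT, hwu'⟩
    · refine ⟨?_, ?_, ?_, ?_⟩
      · simp only [if_neg huvne.symm, if_pos rfl, hT']
        exact Set.mem_insert_of_mem _ ⟨hu, hne.symm⟩
      · simp [huvne, huvne.symm]
      · simp [huvne, huvne.symm]
      · simpa [huvne.symm] using huv.symm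
    · simp only [Set.mem_singleton_iff] at hwu'
      by_cases hwu : w = u
      · subst hwu
        refine ⟨?_, ?_, ?_, ?_⟩
        · simp [hT']
        · simp [huvne, huvne.symm]
        · simp [huvne, huvne.symm]
        · simpa [huvne] using huv
      · have hwv : w ≠ v := fun h => hv (h ▸ hwT)
        obtain ⟨h1, h2, h3, h4⟩ := hm w hwT
        have hmu : m w ≠ u := fun h => hwu' (by rw [hu', ← h, h2])
        have hmv : m w ≠ v := fun h => hv (h ▸ h1)
        have hmu' : m w ≠ u' := fun h => hwu (by rw [← hinv, ← h, h2])
        refine ⟨?_, ?_, ?_, ?_⟩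
        · simp only [if_neg hwu, if_neg hwv, hT']
          exact Set.mem_insert_of_mem _ ⟨h1, by simpa using hmu'⟩
        · simp only [if_neg hwu, if_neg hwv, if_neg hmu, if_neg hmv]; exact h2
        · simp only [if_neg hwu, if_neg hwv]; exact h3
        · simp only [if_neg hwu, if_neg hwv]; exact h4
  · rw [hT', Set.ncard_exchange hv hu'T]
  · -- Defends
    refine ⟨fun w => if w = u then v else if w = u' then u else w, ?_, ?_, ?_⟩
    · constructor
      · -- MapsTo
        intro w hw
        by_cases h1 : w = u
        · simp [h1, hT']
        · by_cases h2 : w = u'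
          · simp only [if_neg h1, if_pos h2]
            exact Set.mem_insert_of_mem _ ⟨hu, hne.symm⟩
          · simp only [if_neg h1, if_neg h2]
            exact Set.mem_insert_of_mem _ ⟨hw, by simpa using h2⟩
      refine ⟨?_, ?_⟩
      · -- InjOn
        intro a ha b hb hab
        have hbv : b ≠ v := fun h => hv (h ▸ hb)
        have hav : a ≠ v := fun h => hv (h ▸ ha)
        by_cases ha1 : a = u <;> by_cases hb1 : b = u <;>
          by_cases ha2 : a = u' <;> by_cases hb2 : b = u' <;>
          simp_all
      · -- SurjOn
        intro y hy
        rcases hy with rfl | ⟨hyT, hyu'⟩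
        · exact ⟨u, hu, by simp⟩
        · simp only [Set.mem_singleton_iff] at hyu'
          by_cases hyu : y = u
          · exact ⟨u', hu'T, by simp [hyu, hne.symm, hne]⟩
          · exact ⟨y, hyT, by simp [hyu, hyu']⟩
    · intro w hw
      by_cases h1 : w = u
      · simp only [h1, if_pos rfl]
        exact Or.inr huv
      · by_cases h2 : w = u'
        · simp only [if_neg h1, if_pos h2]
          exact Or.inr (by rw [h2]; exact hadj.symm)
        · simp [h1, h2]
    · exact Or.inl ⟨hu, by simp⟩

lemma aux_swap {T : Set V} {u v : V} (huv : G.Adj u v) (hu : u ∈ T) (hv : v ∈ T) :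
    Defends G T T u v := by
  classical
  refine ⟨Equiv.swap u v, ?_, ?_, Or.inl ⟨hu, Equiv.swap_apply_left u v⟩⟩
  · constructor
    · intro w hw
      rcases eq_or_ne w u with rfl | h1
      · rwa [Equiv.swap_apply_left]
      rcases eq_or_ne w v with rfl | h2
      · rwa [Equiv.swap_apply_right]
      · rwa [Equiv.swap_apply_of_ne_of_ne h1 h2]
    refine ⟨fun a _ b _ h => (Equiv.swap u v).injective h, ?_⟩
    · intro y hy
      refine ⟨Equiv.swap u v y, ?_, Equiv.swap_apply_self u v y⟩
      rcases eq_or_ne y u with rfl | h1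
      · rwa [Equiv.swap_apply_left]
      rcases eq_or_ne y v with rfl | h2
      · rwa [Equiv.swap_apply_right]
      · rwa [Equiv.swap_apply_of_ne_of_ne h1 h2]
  · intro w hw
    rcases eq_or_ne w u with rfl | h1
    · rw [Equiv.swap_apply_left]; exact Or.inr huv
    rcases eq_or_ne w v with rfl | h2
    · rw [Equiv.swap_apply_right]; exact Or.inr huv.symm
    · rw [Equiv.swap_apply_of_ne_of_ne h1 h2]; exact Or.inl rfl

lemma aux_class : IsEvcClassOn G ∅ (auxNu G) {T | ∃ m, AuxMP G T m ∧ T.ncard = auxNu G} := by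
  refine ⟨?_, ?_, ?_⟩
  · obtain ⟨T, m, hm, hT⟩ := auxNu_mem G
    exact ⟨T, m, hm, hT⟩
  · rintro S ⟨m, hm, hS⟩
    exact ⟨aux_isVC G hm hS, Set.empty_subset S, hS⟩
  · rintro S ⟨m, hm, hS⟩ u v huv
    rcases aux_isVC G hm hS huv with hu | hvS
    · by_cases hv : v ∈ S
      · exact ⟨S, ⟨m, hm, hS⟩, aux_swap G huv hu hv⟩
      · obtain ⟨T', m', h1, h2, h3⟩ := aux_defend G hm huv hu hv
        exact ⟨T', ⟨m', h1, h2.trans hS⟩, h3⟩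
    · by_cases hu : u ∈ S
      · exact ⟨S, ⟨m, hm, hS⟩, aux_swap G huv hu hvS⟩
      · obtain ⟨T', m', h1, h2, ⟨f, hf1, hf2, hf3⟩⟩ := aux_defend G hm huv.symm hvS hu
        exact ⟨T', ⟨m', h1, h2.trans hS⟩, f, hf1, hf2, hf3.symm⟩

end Aux

/-- For any (finite) graph `G`, `mvc G ≤ evc G ≤ 2 * mvc G`. -/
theorem evc_between_mvc_and_twice_mvc {V : Type*} [Finite V] (G : SimpleGraph V) :
    mvc G ≤ evc G ∧ evc G ≤ 2 * mvc G := by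
  have hE : auxNu G ∈ {k | ∃ C : Set (Set V), IsEvcClassOn G ∅ k C} :=
    ⟨_, aux_class G⟩
  have hle : evc G ≤ auxNu G := Nat.sInf_le hE
  constructor
  · obtain ⟨C, hC⟩ := Nat.sInf_mem (⟨_, hE⟩ :
      {k | ∃ C : Set (Set V), IsEvcClassOn G ∅ k C}.Nonempty)
    obtain ⟨⟨S, hS⟩, h2, _⟩ := hC
    obtain ⟨hVC, _, hcard⟩ := h2 S hS
    exact Nat.sInf_le ⟨S, hVC, hcard⟩
  · exact hle.trans (auxNu_le G)
end

section
/- Let G be a connected graph with at least two vertices. If evc(G) = mvc(G), then for every vertex v of G there exists a minimum vertex cover of G containing v. -/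
open EVC SimpleGraph

/-- If `G` is connected with at least two vertices and `evc G = mvc G`,
then every vertex lies in some minimum vertex cover. -/
theorem every_vertex_in_min_vc_of_evc_eq_mvc {V : Type*} [Finite V] [Nontrivial V]
    (G : SimpleGraph V) (hconn : G.Connected) (h : evc G = mvc G) :
    ∀ v : V, ∃ S : Set V, IsVC G S ∧ S.ncard = mvc G ∧ v ∈ S := by
  intro v
  -- G has an edge at every vertex
  have hnbr : ∀ x : V, ∃ y, G.Adj x y := by
    intro x
    obtain ⟨y, hy⟩ := exists_ne x
    obtain ⟨w⟩ := hconn x y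
    cases w with
    | nil => exact absurd rfl hy.symm
    | cons hadj _ => exact ⟨_, hadj⟩
  have hedge : ∃ a b : V, G.Adj a b := ⟨v, hnbr v⟩
  -- the evc set is nonempty
  have hT : {k | ∃ C : Set (Set V), IsEvcClassOn G ∅ k C}.Nonempty := by
    by_contra hempty
    rw [Set.not_nonempty_iff_eq_empty] at hempty
    have hevc0 : evc G = 0 := by
      simp [evc, evcOn, hempty]
    have hmvc0 : mvc G = 0 := by rw [← h, hevc0]
    -- mvc set is nonempty, so minimum is attained
    have hMne : {k | ∃ S : Set V, IsVC G S ∧ S.ncard = k}.Nonempty :=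
      ⟨(Set.univ : Set V).ncard, Set.univ, fun u w _ => Or.inl trivial, rfl⟩
    have := Nat.sInf_mem hMne
    rw [show sInf {k | ∃ S : Set V, IsVC G S ∧ S.ncard = k} = mvc G from rfl, hmvc0] at this
    obtain ⟨S, hSvc, hS0⟩ := this
    have hSemp : S = ∅ := (Set.ncard_eq_zero (Set.toFinite S)).mp hS0
    obtain ⟨a, b, hab⟩ := hedge
    rcases hSvc hab with hc | hc <;> simp [hSemp] at hc
  have hmem := Nat.sInf_mem hT
  obtain ⟨C, hCne, hCprop, hCdef⟩ := hmem
  obtain ⟨S, hS⟩ := hCne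
  by_cases hv : v ∈ S
  · obtain ⟨hSvc, _, hScard⟩ := hCprop S hS
    exact ⟨S, hSvc, by rw [hScard]; exact (h ▸ rfl : evcOn G ∅ = mvc G), hv⟩
  · obtain ⟨u, hu⟩ := hnbr v
    obtain ⟨S', hS', f, hbij, _, hcase⟩ := hCdef S hS u v hu.symm
    have hvS' : v ∈ S' := by
      rcases hcase with ⟨huS, hfu⟩ | ⟨hvS, _⟩
      · rw [← hfu]; exact hbij.mapsTo huS
      · exact absurd hvS hv
    obtain ⟨hSvc, _, hScard⟩ := hCprop S' hS'
    exact ⟨S', hSvc, by rw [hScard]; exact (h ▸ rfl : evcOn G ∅ = mvc G), hvS'⟩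
end

section
/- Let G be a connected graph with at least two vertices and U a subset of vertices. If evc_U(G) = mvc_U(G), then for every vertex v not in U, mvc_{U∪{v}}(G) = mvc_U(G). -/
open EVC SimpleGraph

/-- If `G` is connected with at least two vertices, `U ⊆ V(G)` and
`evc_U(G) = mvc_U(G)`, then for every vertex `v ∉ U`, `mvc_{U ∪ {v}}(G) = mvc_U(G)`. -/
theorem mvcOn_insert_eq_of_evcOn_eq_mvcOn {V : Type*} [Finite V] [Nontrivial V]
    (G : SimpleGraph V) (hconn : G.Connected) (U : Set V)
    (h : evcOn G U = mvcOn G U) :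
    ∀ v : V, v ∉ U → mvcOn G (U ∪ {v}) = mvcOn G U := by
  intro v hv
  classical
  have hCuniv : IsEvcClassOn G U ((Set.univ : Set V).ncard) {Set.univ} := by
    refine ⟨⟨Set.univ, rfl⟩, ?_, ?_⟩
    · rintro S rfl
      exact ⟨fun u w _ => Or.inl trivial, Set.subset_univ _, rfl⟩
    · rintro S rfl u w huw
      refine ⟨Set.univ, rfl, Equiv.swap u w, ?_, ?_,
        Or.inl ⟨trivial, Equiv.swap_apply_left u w⟩⟩
      · exact Function.Bijective.bijOn_univ (Equiv.bijective _)
      · intro x _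
        rcases eq_or_ne x u with rfl | hxu
        · right; rw [Equiv.swap_apply_left]; exact huw
        rcases eq_or_ne x w with rfl | hxw
        · right; rw [Equiv.swap_apply_right]; exact huw.symm
        · left; exact Equiv.swap_apply_of_ne_of_ne hxu hxw
  have hne : {k | ∃ C : Set (Set V), IsEvcClassOn G U k C}.Nonempty :=
    ⟨_, {Set.univ}, hCuniv⟩
  have hC' : evcOn G U ∈ {k | ∃ C : Set (Set V), IsEvcClassOn G U k C} :=
    Nat.sInf_mem hne
  obtain ⟨C, hC⟩ := hC'
  rw [h] at hC
  obtain ⟨⟨S, hS⟩, hprop, hdef⟩ := hC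
  obtain ⟨hSVC, hSU, hScard⟩ := hprop S hS
  have key : ∃ S'' ∈ C, v ∈ S'' := by
    by_cases hvS : v ∈ S
    · exact ⟨S, hS, hvS⟩
    · obtain ⟨w, hvw⟩ : ∃ w, G.Adj v w := by
        obtain ⟨w, hwv⟩ := exists_ne v
        obtain ⟨p⟩ := hconn.preconnected v w
        cases p with
        | nil => exact absurd rfl hwv.symm
        | cons hadj _ => exact ⟨_, hadj⟩
      have hwS : w ∈ S := (hSVC hvw).resolve_left hvS
      obtain ⟨S', hS', f, hbij, hmov, hcase⟩ := hdef S hS w v hvw.symm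
      rcases hcase with ⟨hwS', hfw⟩ | ⟨hvS', _⟩
      · exact ⟨S', hS', hfw ▸ hbij.mapsTo hwS'⟩
      · exact absurd hvS' hvS
  obtain ⟨S'', hS'', hvS''⟩ := key
  obtain ⟨hVC'', hU'', hcard''⟩ := hprop S'' hS''
  apply le_antisymm
  · have : mvcOn G (U ∪ {v}) ≤ S''.ncard :=
      Nat.sInf_le ⟨S'', hVC'', Set.union_subset hU'' (Set.singleton_subset_iff.2 hvS''), rfl⟩
    exact this.trans_eq hcard''
  · have hne2 : {k | ∃ S : Set V, IsVC G S ∧ U ∪ {v} ⊆ S ∧ S.ncard = k}.Nonempty :=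
      ⟨_, Set.univ, fun _ _ _ => Or.inl trivial, Set.subset_univ _, rfl⟩
    obtain ⟨S₀, h₀VC, h₀sub, h₀card⟩ := Nat.sInf_mem hne2
    exact Nat.sInf_le ⟨S₀, h₀VC, Set.subset_union_left.trans h₀sub, h₀card⟩
end

section
/- Let G be a connected graph with at least two vertices and X its set of cut vertices. If evc(G) = mvc(G), then for every vertex v ∈ V(G) \ X there exists a minimum vertex cover S_v of G with X ∪ {v} ⊆ S_v. -/
open EVC SimpleGraph

section Aux

variable {V : Type*} [Finite V]

/-- The minimum size of a subset of `A` covering all edges of `G` inside `A`. -/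
noncomputable def covIn (G : SimpleGraph V) (A : Set V) : ℕ :=
  sInf {k | ∃ T : Set V, T ⊆ A ∧
    (∀ u v, G.Adj u v → u ∈ A → v ∈ A → u ∈ T ∨ v ∈ T) ∧ T.ncard = k}

lemma covIn_le (G : SimpleGraph V) {A T : Set V} (hTA : T ⊆ A)
    (hcov : ∀ u v, G.Adj u v → u ∈ A → v ∈ A → u ∈ T ∨ v ∈ T) :
    covIn G A ≤ T.ncard :=
  Nat.sInf_le ⟨T, hTA, hcov, rfl⟩

lemma exists_covIn (G : SimpleGraph V) (A : Set V) :
    ∃ T : Set V, T ⊆ A ∧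
      (∀ u v, G.Adj u v → u ∈ A → v ∈ A → u ∈ T ∨ v ∈ T) ∧ T.ncard = covIn G A :=
  Nat.sInf_mem (s := {k | ∃ T : Set V, T ⊆ A ∧
    (∀ u v, G.Adj u v → u ∈ A → v ∈ A → u ∈ T ∨ v ∈ T) ∧ T.ncard = k})
    ⟨A.ncard, A, subset_rfl, fun u _ _ hu _ => Or.inl hu, rfl⟩

lemma mvc_le (G : SimpleGraph V) {S : Set V} (hS : IsVC G S) : mvc G ≤ S.ncard :=
  Nat.sInf_le ⟨S, hS, rfl⟩

/-- The trivial eternal vertex cover class with all vertices occupied. -/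
lemma trivial_evc_class (G : SimpleGraph V) :
    IsEvcClassOn G ∅ (Nat.card V) {(Set.univ : Set V)} := by
  classical
  refine ⟨⟨Set.univ, rfl⟩, ?_, ?_⟩
  · rintro S rfl
    exact ⟨fun u v _ => Or.inl trivial, Set.empty_subset _, Set.ncard_univ V⟩
  · rintro S rfl u v huv
    refine ⟨Set.univ, rfl, Equiv.swap u v, (Equiv.swap u v).bijective.bijOn_univ, ?_, ?_⟩
    · intro w _
      rcases eq_or_ne w u with rfl | hwu
      · rw [Equiv.swap_apply_left]; exact Or.inr huv
      rcases eq_or_ne w v with rfl | hwv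
      · rw [Equiv.swap_apply_right]; exact Or.inr huv.symm
      · rw [Equiv.swap_apply_of_ne_of_ne hwu hwv]; exact Or.inl rfl
    · exact Or.inl ⟨trivial, Equiv.swap_apply_left u v⟩

lemma exists_evc_class (G : SimpleGraph V) :
    ∃ C : Set (Set V), IsEvcClassOn G ∅ (evc G) C :=
  Nat.sInf_mem (s := {k | ∃ C : Set (Set V), IsEvcClassOn G ∅ k C})
    ⟨Nat.card V, {(Set.univ : Set V)}, trivial_evc_class G⟩

/-- From a walk ending at `x` and starting at `a ≠ x`, extract a neighbor of `x`
reachable from `a` in the graph with `x` deleted. -/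
lemma walk_to_neighbor (G : SimpleGraph V) {x : V} :
    ∀ {a b : V}, G.Walk a b → x = b → ∀ ha : a ≠ x, ∃ p, ∃ hp : p ≠ x, G.Adj x p ∧
      (G.induce {v : V | v ≠ x}).Reachable ⟨a, ha⟩ ⟨p, hp⟩ := by
  intro a b W
  induction W with
  | nil => rintro rfl ha; exact absurd rfl ha
  | @cons u c b h W ih =>
    rintro rfl ha
    rcases eq_or_ne c x with rfl | hc
    · exact ⟨u, ha, h.symm, Reachable.refl _⟩
    · obtain ⟨p, hp, hadj, hr⟩ := ih rfl hc
      refine ⟨p, hp, hadj, Reachable.trans (Adj.reachable ?_) hr⟩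
      show (G.induce {v : V | v ≠ x}).Adj ⟨u, ha⟩ ⟨c, hc⟩
      simpa using h

/-- Drain lemma: if `x ∉ S` for some configuration `S` of an evc class, and `P` is a
set closed under adjacency except through `x`, containing a neighbor of `x`, then `P`
holds strictly more than `covIn G P` guards. -/
lemma drain {G : SimpleGraph V} {k : ℕ} {C : Set (Set V)}
    (hC : IsEvcClassOn G ∅ k C) {S : Set V} (hS : S ∈ C) {x : V} (hx : x ∉ S)
    {P : Set V} (hxP : x ∉ P)
    (hcl : ∀ w ∈ P, ∀ z, G.Adj w z → z ∈ P ∨ z = x)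
    {p : V} (hp : p ∈ P) (hadj : G.Adj x p) :
    covIn G P + 1 ≤ (S ∩ P).ncard := by
  obtain ⟨hCne, hmem, hdef⟩ := hC
  have hSvc : IsVC G S := (hmem S hS).1
  have hpS : p ∈ S := by
    rcases hSvc hadj with h1 | h1
    · exact absurd h1 hx
    · exact h1
  obtain ⟨S', hS', f, hbij, hmove, hcross⟩ := hdef S hS x p hadj
  have hfp : f p = x := by
    rcases hcross with ⟨hxS, _⟩ | ⟨_, h2⟩
    · exact absurd hxS hx
    · exact h2
  have himg : f '' S = S' := hbij.image_eq
  -- S' ∩ P = (f '' (S ∩ P)) \ {x}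
  have hkey : S' ∩ P = (f '' (S ∩ P)) \ {x} := by
    ext y
    constructor
    · rintro ⟨hyS', hyP⟩
      have hyx : y ≠ x := fun h => hxP (h ▸ hyP)
      rw [← himg] at hyS'
      obtain ⟨w, hwS, hfw⟩ := hyS'
      have hwP : w ∈ P := by
        by_contra hwP
        rcases hmove w hwS with h1 | h1
        · exact hwP ((h1.symm.trans hfw) ▸ hyP)
        · rw [hfw] at h1
          rcases hcl y hyP w h1.symm with h2 | h2
          · exact hwP h2
          · exact hx (h2 ▸ hwS)
      exact ⟨⟨w, ⟨hwS, hwP⟩, hfw⟩, hyx⟩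
    · rintro ⟨⟨w, ⟨hwS, hwP⟩, hfw⟩, hyx⟩
      have hyx' : y ≠ x := hyx
      have hyS' : y ∈ S' := by rw [← himg]; exact ⟨w, hwS, hfw⟩
      refine ⟨hyS', ?_⟩
      rcases hmove w hwS with h1 | h1
      · rwa [← hfw, h1]
      · rw [hfw] at h1
        rcases hcl w hwP y h1 with h2 | h2
        · exact h2
        · exact absurd h2 hyx'
  have hxmem : x ∈ f '' (S ∩ P) := ⟨p, ⟨hpS, hp⟩, hfp⟩
  have hcard1 : (f '' (S ∩ P)).ncard = (S ∩ P).ncard :=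
    Set.ncard_image_of_injOn (hbij.injOn.mono Set.inter_subset_left)
  have hcard2 : ((f '' (S ∩ P)) \ {x}).ncard + 1 = (f '' (S ∩ P)).ncard :=
    Set.ncard_diff_singleton_add_one hxmem (Set.toFinite _)
  have hcov : covIn G P ≤ (S' ∩ P).ncard := by
    refine covIn_le G Set.inter_subset_right ?_
    intro u v huv hu hv
    rcases (hmem S' hS').1 huv with h1 | h1
    · exact Or.inl ⟨h1, hu⟩
    · exact Or.inr ⟨h1, hv⟩
  rw [hkey] at hcov
  omega

end Aux

/-- Necessary condition. If `G` is connected with at least two vertices,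
`X` its set of cut vertices and `evc G = mvc G`, then every non-cut vertex `v` lies in a
minimum vertex cover containing `X ∪ {v}`. -/
theorem min_vc_containing_cutVertices_and_v_of_evc_eq_mvc {V : Type*} [Finite V]
    [Nontrivial V] (G : SimpleGraph V) (hconn : G.Connected) (h : evc G = mvc G) :
    ∀ v : V, v ∉ cutVertices G →
      ∃ S : Set V, IsVC G S ∧ S.ncard = mvc G ∧ cutVertices G ∪ {v} ⊆ S := by
  intro v hv
  -- get an evc class of size `mvc G`
  obtain ⟨C, hC⟩ := exists_evc_class G
  rw [h] at hC
  obtain ⟨hCne, hmem, hdef⟩ := hC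
  -- every configuration contains every cut vertex
  have hcut : ∀ S ∈ C, ∀ x ∈ cutVertices G, x ∈ S := by
    intro S hS x hxcut
    by_contra hx
    obtain ⟨-, hnc⟩ := hxcut
    have hne : Nonempty ({v : V | v ≠ x} : Set V) := by
      obtain ⟨y, hy⟩ := exists_ne x
      exact ⟨⟨y, hy⟩⟩
    have hnp : ¬ (G.induce {v : V | v ≠ x}).Preconnected :=
      fun hp => hnc ((connected_iff _).mpr ⟨hp, hne⟩)
    obtain ⟨a', h1⟩ := not_forall.mp hnp
    obtain ⟨b', hab'⟩ := not_forall.mp h1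
    -- the two sides of the cut
    set A : Set V := {w | ∃ hw : w ≠ x,
      (G.induce {v : V | v ≠ x}).Reachable a' ⟨w, hw⟩} with hAdef
    set B : Set V := {w | w ≠ x} \ A with hBdef
    have hxA : x ∉ A := fun ⟨hw, _⟩ => hw rfl
    have hxB : x ∉ B := fun ⟨hw, _⟩ => hw rfl
    have hAB : Disjoint A B := Set.disjoint_sdiff_right
    have hclA : ∀ w ∈ A, ∀ z, G.Adj w z → z ∈ A ∨ z = x := by
      rintro w ⟨hw, hrw⟩ z hadj
      rcases eq_or_ne z x with rfl | hz
      · exact Or.inr rfl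
      · refine Or.inl ⟨hz, hrw.trans (Adj.reachable ?_)⟩
        show (G.induce {v : V | v ≠ x}).Adj ⟨w, hw⟩ ⟨z, hz⟩
        simpa using hadj
    have hclB : ∀ w ∈ B, ∀ z, G.Adj w z → z ∈ B ∨ z = x := by
      rintro w ⟨hw, hwA⟩ z hadj
      rcases eq_or_ne z x with rfl | hz
      · exact Or.inr rfl
      · refine Or.inl ⟨hz, fun hzA => hwA ?_⟩
        obtain ⟨hz', hrz⟩ := hzA
        refine ⟨hw, hrz.trans (Adj.reachable ?_)⟩
        show (G.induce {v : V | v ≠ x}).Adj ⟨z, hz⟩ ⟨w, hw⟩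
        simpa using hadj.symm
    -- neighbors of x in A and in B
    have ha' : (a' : V) ≠ x := a'.2
    have hb' : (b' : V) ≠ x := b'.2
    obtain ⟨pA, hpA, hadjA, hrA⟩ :=
      walk_to_neighbor G ((hconn (a' : V) x).some) rfl ha'
    obtain ⟨pB, hpB, hadjB, hrB⟩ :=
      walk_to_neighbor G ((hconn (b' : V) x).some) rfl hb'
    have hpAA : pA ∈ A := ⟨hpA, by simpa using hrA⟩
    have hpBB : pB ∈ B := by
      refine ⟨hpB, fun hzA => ?_⟩
      obtain ⟨hz', hrz⟩ := hzA
      exact hab' (hrz.trans hrB.symm)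
    -- drain both sides
    have hCcl : IsEvcClassOn G ∅ (mvc G) C := ⟨hCne, hmem, hdef⟩
    have hdA := drain hCcl hS hx hxA hclA hpAA hadjA
    have hdB := drain hCcl hS hx hxB hclB hpBB hadjB
    -- combine: S = (S ∩ A) ∪ (S ∩ B)
    have hSsub : S ⊆ A ∪ B := by
      intro w hw
      have hwx : w ≠ x := fun hh => hx (hh ▸ hw)
      by_cases hwA : w ∈ A
      · exact Or.inl hwA
      · exact Or.inr ⟨hwx, hwA⟩
    have hScard : S.ncard = (S ∩ A).ncard + (S ∩ B).ncard := by
      rw [← Set.ncard_union_eq (hAB.mono Set.inter_subset_right Set.inter_subset_right)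
        (Set.toFinite _) (Set.toFinite _), ← Set.inter_union_distrib_left,
        Set.inter_eq_self_of_subset_left hSsub]
    -- a small vertex cover from the two sides
    obtain ⟨TA, hTAsub, hTAcov, hTAcard⟩ := exists_covIn G A
    obtain ⟨TB, hTBsub, hTBcov, hTBcard⟩ := exists_covIn G B
    have hVCsmall : IsVC G (insert x (TA ∪ TB)) := by
      intro u w huw
      rcases eq_or_ne u x with rfl | hux
      · exact Or.inl (Set.mem_insert _ _)
      rcases eq_or_ne w x with rfl | hwx
      · exact Or.inr (Set.mem_insert _ _)
      have huAB : u ∈ A ∪ B := by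
        by_cases huA : u ∈ A
        · exact Or.inl huA
        · exact Or.inr ⟨hux, huA⟩
      have hwAB : w ∈ A ∪ B := by
        by_cases hwA : w ∈ A
        · exact Or.inl hwA
        · exact Or.inr ⟨hwx, hwA⟩
      rcases huAB with huA | huB
      · rcases hwAB with hwA | hwB
        · rcases hTAcov u w huw huA hwA with h1 | h1
          · exact Or.inl (Set.mem_insert_of_mem _ (Or.inl h1))
          · exact Or.inr (Set.mem_insert_of_mem _ (Or.inl h1))
        · rcases hclA u huA w huw with h1 | h1
          · exact absurd h1 hwB.2
          · exact absurd h1 hwx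
      · rcases hwAB with hwA | hwB
        · rcases hclB u huB w huw with h1 | h1
          · exact absurd h1 (Set.disjoint_left.mp hAB hwA)
          · exact absurd h1 hwx
        · rcases hTBcov u w huw huB hwB with h1 | h1
          · exact Or.inl (Set.mem_insert_of_mem _ (Or.inr h1))
          · exact Or.inr (Set.mem_insert_of_mem _ (Or.inr h1))
    have hmvc_le : mvc G ≤ 1 + (covIn G A + covIn G B) := by
      calc mvc G ≤ (insert x (TA ∪ TB)).ncard := mvc_le G hVCsmall
        _ ≤ (TA ∪ TB).ncard + 1 := Set.ncard_insert_le _ _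
        _ ≤ (TA.ncard + TB.ncard) + 1 := by
            exact Nat.add_le_add_right (Set.ncard_union_le _ _) 1
        _ = 1 + (covIn G A + covIn G B) := by rw [hTAcard, hTBcard]; ring
    have hScard' : S.ncard = mvc G := (hmem S hS).2.2
    omega
  -- get a configuration containing v
  obtain ⟨S0, hS0⟩ := hCne
  by_cases hvS0 : v ∈ S0
  · exact ⟨S0, (hmem S0 hS0).1, (hmem S0 hS0).2.2, by
      rintro w (hw | rfl)
      · exact hcut S0 hS0 w hw
      · exact hvS0⟩
  · -- v has a neighbor
    obtain ⟨y, hy⟩ := exists_ne v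
    have hr : G.Reachable v y := hconn v y
    obtain ⟨u, hu⟩ : ∃ u, G.Adj v u := by
      obtain ⟨W⟩ := hr
      cases W with
      | nil => exact absurd rfl hy.symm
      | cons h _ => exact ⟨_, h⟩
    obtain ⟨S', hS', f, hbij, hmove, hcross⟩ := hdef S0 hS0 u v hu.symm
    have hvS' : v ∈ S' := by
      rcases hcross with ⟨huS, hfu⟩ | ⟨hvS, _⟩
      · rw [← hfu, ← hbij.image_eq]; exact ⟨u, huS, rfl⟩
      · exact absurd hvS hvS0
    exact ⟨S', (hmem S' hS').1, (hmem S' hS').2.2, by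
      rintro w (hw | rfl)
      · exact hcut S' hS' w hw
      · exact hvS'⟩
end

section
/- For any connected graph G with at least three vertices that has a vertex of degree one, evc(G) ≠ mvc(G). -/
/-!
Let `u` be a leaf with neighbour `w`. If `evc G = mvc G`, every configuration of an optimal
eternal class is a minimum vertex cover, so it never contains both `u` and `w` (removing `u`
would leave a smaller cover). Some configuration `S` contains `u`, hence not `w`. As `G` is
connected with at least three vertices, `w` has a neighbour `x ≠ u`, and `x ∈ S`. An attack
on `wx` forces the guard on `x` onto `w`; the guard on `u` cannot also move to `w`, so it
stays, and the next configuration contains both `u` and `w`.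
-/

namespace EVC

open SimpleGraph

variable {V : Type*} {G : SimpleGraph V}

theorem isVC_univ (G : SimpleGraph V) : IsVC G Set.univ :=
  fun _ _ _ => Or.inl trivial

theorem mvc_le_ncard {S : Set V} (hS : IsVC G S) : mvc G ≤ S.ncard :=
  Nat.sInf_le ⟨S, hS, rfl⟩

theorem IsVC.sdiff_singleton_of_neighborSet_eq {S : Set V} {u w : V} (hS : IsVC G S)
    (hu : G.neighborSet u = {w}) (hwS : w ∈ S) : IsVC G (S \ {u}) := by
  have hwu : w ≠ u := (G.ne_of_adj (show w ∈ G.neighborSet u by simp [hu])).symm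
  have cover_at : ∀ a b, G.Adj a b → a ∈ S → a ∈ S \ {u} ∨ b ∈ S \ {u} := by
    intro a b hab haS
    by_cases hau : a = u
    · subst hau
      have hb : b = w := by simpa [hu] using (show b ∈ G.neighborSet a from hab)
      exact Or.inr ⟨hb ▸ hwS, by simpa [hb] using hwu⟩
    · exact Or.inl ⟨haS, hau⟩
  intro a b hab
  rcases hS hab with haS | hbS
  · exact cover_at a b hab haS
  · exact (cover_at b a hab.symm hbS).symm

theorem notMem_of_ncard_eq_mvc [Finite V] {S : Set V} {u w : V} (hS : IsVC G S)
    (hmin : S.ncard = mvc G) (hu : G.neighborSet u = {w}) (huS : u ∈ S) : w ∉ S := by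
  intro hwS
  have hle := mvc_le_ncard (hS.sdiff_singleton_of_neighborSet_eq hu hwS)
  have hlt := Set.ncard_sdiff_singleton_lt_of_mem huS
  omega

theorem exists_adj_ne_of_neighborSet_eq (hconn : G.Connected) (hcard : 3 ≤ ENat.card V)
    {u w : V} (hu : G.neighborSet u = {w}) : ∃ x, G.Adj w x ∧ x ≠ u := by
  obtain ⟨z, hzu, hzw⟩ := ENat.exists_ne_ne_of_three_le hcard u w
  obtain ⟨p⟩ := hconn.preconnected u z
  obtain ⟨d, -, hfst, hsnd⟩ :=
    p.exists_boundary_dart {u, w} (by simp) (by simp [hzu, hzw])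
  simp only [Set.mem_insert_iff, Set.mem_singleton_iff, not_or] at hfst hsnd
  rcases hfst with hfst | hfst
  · have : d.snd ∈ G.neighborSet u := hfst ▸ d.adj
    exact absurd (by simpa [hu] using this) hsnd.2
  · exact ⟨d.snd, hfst ▸ d.adj, hsnd.1⟩

theorem defends_univ_univ {a b : V} (hab : G.Adj a b) : Defends G Set.univ Set.univ a b := by
  classical
  refine ⟨Equiv.swap a b, (Equiv.swap a b).bijective.bijOn_univ, fun z _ => ?_,
    Or.inl ⟨trivial, Equiv.swap_apply_left a b⟩⟩
  rcases eq_or_ne z a with rfl | hza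
  · exact Or.inr (by rwa [Equiv.swap_apply_left])
  rcases eq_or_ne z b with rfl | hzb
  · exact Or.inr (by rw [Equiv.swap_apply_right]; exact hab.symm)
  · exact Or.inl (Equiv.swap_apply_of_ne_of_ne hza hzb)

theorem isEvcClassOn_singleton_univ (G : SimpleGraph V) (U : Set V) :
    IsEvcClassOn G U (Nat.card V) {Set.univ} := by
  refine ⟨Set.singleton_nonempty _, ?_, ?_⟩
  · rintro S rfl
    exact ⟨isVC_univ G, Set.subset_univ U, Set.ncard_univ V⟩
  · rintro S rfl a b hab
    exact ⟨Set.univ, rfl, defends_univ_univ hab⟩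

theorem exists_isEvcClassOn_evcOn (G : SimpleGraph V) (U : Set V) :
    ∃ C, IsEvcClassOn G U (evcOn G U) C :=
  Nat.sInf_mem (s := {k | ∃ C, IsEvcClassOn G U k C})
    ⟨Nat.card V, {Set.univ}, isEvcClassOn_singleton_univ G U⟩

theorem Defends.mem_or_mem {S S' : Set V} {u v : V} (h : Defends G S S' u v) :
    (u ∈ S ∧ v ∈ S') ∨ (v ∈ S ∧ u ∈ S') := by
  obtain ⟨f, hf, -, ⟨huS, hfu⟩ | ⟨hvS, hfv⟩⟩ := h
  · exact Or.inl ⟨huS, hfu ▸ hf.mapsTo huS⟩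
  · exact Or.inr ⟨hvS, hfv ▸ hf.mapsTo hvS⟩

theorem IsEvcClassOn.exists_mem_of_adj {U : Set V} {k : ℕ} {C : Set (Set V)}
    (hC : IsEvcClassOn G U k C) {u v : V} (huv : G.Adj u v) : ∃ S ∈ C, u ∈ S := by
  obtain ⟨S, hS⟩ := hC.1
  obtain ⟨S', hS', hdef⟩ := hC.2.2 S hS u v huv
  rcases hdef.mem_or_mem with ⟨huS, -⟩ | ⟨-, huS'⟩
  · exact ⟨S, hS, huS⟩
  · exact ⟨S', hS', huS'⟩

theorem Defends.mem_of_neighborSet_eq {S S' : Set V} {u w x : V} (h : Defends G S S' w x)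
    (hwS : w ∉ S) (huS : u ∈ S) (hu : G.neighborSet u = {w}) (hxu : x ≠ u) :
    u ∈ S' ∧ w ∈ S' := by
  obtain ⟨f, hf, hmove, ⟨hwS', -⟩ | ⟨hxS, hfx⟩⟩ := h
  · exact absurd hwS' hwS
  have hfu : f u = u := by
    refine (hmove u huS).resolve_right fun hadj => hxu ?_
    have hfu : f u = w := by simpa [hu] using (show f u ∈ G.neighborSet u from hadj)
    exact hf.injOn hxS huS (hfx.trans hfu.symm)
  exact ⟨hfu ▸ hf.mapsTo huS, hfx ▸ hf.mapsTo hxS⟩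

end EVC

open EVC SimpleGraph

/-- A connected graph with at least three vertices and a degree-one vertex
has `evc G ≠ mvc G`. -/
theorem evc_ne_mvc_of_degree_one {V : Type*} [Finite V] (G : SimpleGraph V)
    (hconn : G.Connected) (hcard : 3 ≤ Nat.card V)
    (hdeg : ∃ u : V, (G.neighborSet u).ncard = 1) :
    evc G ≠ mvc G := by
  intro heq
  obtain ⟨u, hu⟩ := hdeg
  obtain ⟨w, hw⟩ := Set.ncard_eq_one.mp hu
  have huw : G.Adj u w := show w ∈ G.neighborSet u by simp [hw]
  obtain ⟨C, hC⟩ := exists_isEvcClassOn_evcOn G ∅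
  have hleaf_alone : ∀ S ∈ C, u ∈ S → w ∉ S := fun S hS => by
    obtain ⟨hvc, -, hk⟩ := hC.2.1 S hS
    exact notMem_of_ncard_eq_mvc hvc (hk.trans heq) hw
  obtain ⟨S₁, hS₁, huS₁⟩ := hC.exists_mem_of_adj huw
  have hcard' : 3 ≤ ENat.card V := by
    rw [ENat.card_eq_coe_natCard]
    exact_mod_cast hcard
  obtain ⟨x, hwx, hxu⟩ := exists_adj_ne_of_neighborSet_eq hconn hcard' hw
  obtain ⟨S₂, hS₂, hdef⟩ := hC.2.2 S₁ hS₁ w x hwx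
  obtain ⟨huS₂, hwS₂⟩ := hdef.mem_of_neighborSet_eq (hleaf_alone S₁ hS₁ huS₁) huS₁ hw hxu
  exact hleaf_alone S₂ hS₂ huS₂ hwS₂
end

section
/- Let G be a graph, U ⊆ V(G), and k = mvc_U(G). Let S_i and S_j be two vertex covers of G of size k containing U, with T = S_i ∩ S_j, A = S_i \ T, B = S_j \ T, and H = G[A ∪ B] the bipartite graph with parts A, B. Then H has a perfect matching. -/
/-!
Removing a set `X ⊆ Si \ Sj` from `Si` and adding its neighbours outside `Si` gives another
vertex cover containing `U` (these neighbours lie in `Sj \ Si`, since `X` misses the cover `Sj`).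
Minimality of `Si` therefore gives `|X| ≤ |N(X) \ Si|`, which is Hall's condition for matching
`Si \ Sj` into `Sj \ Si` along edges of `G`. By symmetry there are such injections in both
directions, and Schröder–Bernstein turns them into a bijection along edges: a perfect matching.
-/

open EVC SimpleGraph

namespace SimpleGraph

variable {V : Type*} {G : SimpleGraph V}

theorem IsVertexCover.sdiff_union_neighborSet {S : Set V} (hS : G.IsVertexCover S) (X : Set V) :
    G.IsVertexCover ((S \ X) ∪ ⋃ x ∈ X, G.neighborSet x) := by
  intro u v huv
  by_cases hu : u ∈ X
  · exact Or.inr (Or.inr (Set.mem_biUnion hu huv))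
  by_cases hv : v ∈ X
  · exact Or.inl (Or.inr (Set.mem_biUnion hv huv.symm))
  rcases hS huv with h | h
  · exact Or.inl (Or.inl ⟨h, hu⟩)
  · exact Or.inr (Or.inl ⟨h, hv⟩)

theorem Subgraph.IsMatching.isPerfectMatching_comap_induce {M : G.Subgraph}
    (hM : M.IsMatching) : (M.comap (Embedding.induce M.verts).toHom).IsPerfectMatching := by
  rw [Subgraph.isPerfectMatching_iff]
  intro v
  obtain ⟨w, hvw, hw⟩ := hM v.2
  refine ⟨⟨w, M.edge_vert hvw.symm⟩, ⟨M.adj_sub hvw, hvw⟩, ?_⟩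
  rintro y ⟨-, hvy⟩
  exact Subtype.ext (hw _ hvy)

end SimpleGraph

namespace EVC

variable {V : Type*} {G : SimpleGraph V} {U S Si Sj : Set V}

theorem mvcOn_le_ncard (hS : IsVC G S) (hU : U ⊆ S) : mvcOn G U ≤ S.ncard :=
  Nat.sInf_le ⟨S, hS, hU, rfl⟩

theorem ncard_le_ncard_neighborSet_sdiff [Finite V] (hi : IsVC G Si) (hUi : U ⊆ Si)
    (hki : Si.ncard = mvcOn G U) (hj : IsVC G Sj) (hUj : U ⊆ Sj) {X : Set V}
    (hX : X ⊆ Si \ Sj) : X.ncard ≤ ((⋃ x ∈ X, G.neighborSet x) \ Si).ncard := by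
  set N := ⋃ x ∈ X, G.neighborSet x
  have hN : N ⊆ Sj := by
    intro v hv
    obtain ⟨x, hx, hxv⟩ := Set.mem_iUnion₂.mp hv
    exact (hj hxv).resolve_left (hX hx).2
  have hcover : IsVC G ((Si \ X) ∪ (N \ Si)) := by
    refine (IsVertexCover.sdiff_union_neighborSet hi X).subset ?_
    rintro v (hv | hv)
    · exact Or.inl hv
    · by_cases hvi : v ∈ Si
      · exact Or.inl ⟨hvi, fun hvX => (hX hvX).2 (hN hv)⟩
      · exact Or.inr ⟨hv, hvi⟩
  have hU : U ⊆ (Si \ X) ∪ (N \ Si) := fun u hu =>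
    Or.inl ⟨hUi hu, fun huX => (hX huX).2 (hUj hu)⟩
  have hXi : X ⊆ Si := hX.trans Set.sdiff_subset
  have := calc
    Si.ncard = mvcOn G U := hki
    _ ≤ ((Si \ X) ∪ (N \ Si)).ncard := mvcOn_le_ncard hcover hU
    _ ≤ (Si \ X).ncard + (N \ Si).ncard := Set.ncard_union_le _ _
    _ = Si.ncard - X.ncard + (N \ Si).ncard := by rw [Set.ncard_sdiff hXi]
  have := Set.ncard_le_ncard hXi
  omega

theorem exists_injective_adj_of_ncard_eq_mvcOn [Finite V] (hi : IsVC G Si) (hUi : U ⊆ Si)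
    (hki : Si.ncard = mvcOn G U) (hj : IsVC G Sj) (hUj : U ⊆ Sj) :
    ∃ f : ↥(Si \ Sj) → ↥(Sj \ Si), Function.Injective f ∧
      ∀ a : ↥(Si \ Sj), G.Adj a (f a) := by
  classical
  have := Fintype.ofFinite V
  refine (Fintype.all_card_le_filter_rel_iff_exists_injective
    fun (a : ↥(Si \ Sj)) (b : ↥(Sj \ Si)) => G.Adj a b).mp fun A => ?_
  let X : Set V := Subtype.val '' (A : Set ↥(Si \ Sj))
  let NA : Finset ↥(Sj \ Si) := {b | ∃ a ∈ A, G.Adj a b}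
  calc A.card = X.ncard := by
        rw [Set.ncard_image_of_injective _ Subtype.val_injective, Set.ncard_coe_finset]
    _ ≤ ((⋃ x ∈ X, G.neighborSet x) \ Si).ncard :=
        ncard_le_ncard_neighborSet_sdiff hi hUi hki hj hUj (by rintro _ ⟨a, -, rfl⟩; exact a.2)
    _ ≤ (Subtype.val '' (NA : Set ↥(Sj \ Si))).ncard := by
        refine Set.ncard_le_ncard ?_
        rintro v ⟨hv, hvi⟩
        obtain ⟨_, ⟨a, ha, rfl⟩, hav⟩ := Set.mem_iUnion₂.mp hv
        exact ⟨⟨v, (hj hav).resolve_left a.2.2, hvi⟩,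
          Finset.mem_filter.mpr ⟨Finset.mem_univ _, a, ha, hav⟩, rfl⟩
    _ = NA.card := by
        rw [Set.ncard_image_of_injective _ Subtype.val_injective, Set.ncard_coe_finset]

end EVC

/-- For two vertex covers `Si`, `Sj` of size `k = mvc_U(G)` both containing
`U`, the bipartite graph induced on `(Si \ Sj) ∪ (Sj \ Si)` has a perfect matching. -/
theorem symmDiff_has_perfect_matching {V : Type*} [Finite V] (G : SimpleGraph V)
    (U : Set V) (Si Sj : Set V)
    (hi : IsVC G Si) (hUi : U ⊆ Si) (hki : Si.ncard = mvcOn G U)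
    (hj : IsVC G Sj) (hUj : U ⊆ Sj) (hkj : Sj.ncard = mvcOn G U) :
    ∃ M : (G.induce ((Si \ Sj) ∪ (Sj \ Si))).Subgraph, M.IsPerfectMatching := by
  obtain ⟨f, hf, hf_adj⟩ := exists_injective_adj_of_ncard_eq_mvcOn hi hUi hki hj hUj
  obtain ⟨g, hg, hg_adj⟩ := exists_injective_adj_of_ncard_eq_mvcOn hj hUj hkj hi hUi
  obtain ⟨h, hh, hh_adj⟩ := Function.Embedding.schroeder_bernstein_of_rel hf hg
    (fun a b => G.Adj a b) hf_adj fun b => (hg_adj b).symm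
  obtain ⟨M, hM_verts, hM⟩ := Subgraph.IsMatching.exists_of_disjoint_sets_of_equiv
    disjoint_sdiff_sdiff (Equiv.ofBijective h hh) hh_adj
  rw [← hM_verts]
  exact ⟨_, hM.isPerfectMatching_comap_induce⟩
end

section
/- Let G be a connected graph in which every block is locally connected. Then every vertex cover of G containing all cut vertices of G induces a connected subgraph of G. -/
open EVC SimpleGraph

/-- A block of `G`: a maximal set of vertices inducing a connected subgraph with no cut
vertex (this covers maximal biconnected components, bridges and isolated vertices). -/
def IsBlock {V : Type*} (G : SimpleGraph V) (Bs : Set V) : Prop :=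
  (G.induce Bs).Connected ∧ (∀ x, ¬ IsCutVertex (G.induce Bs) x) ∧
    ∀ Cs : Set V, Bs ⊆ Cs → (G.induce Cs).Connected →
      (∀ x, ¬ IsCutVertex (G.induce Cs) x) → Bs = Cs

namespace SimpleGraph

variable {V : Type*} {G : SimpleGraph V}

lemma connected_induce_induce_iff {A : Set V} {s : Set A} :
    ((G.induce A).induce s).Connected ↔ (G.induce (Subtype.val '' s)).Connected :=
  Iso.connected_iff
    { Equiv.Set.image Subtype.val s Subtype.val_injective with map_rel_iff' := Iff.rfl }

lemma image_val_neighborSet_induce {A : Set V} (v : A) :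
    Subtype.val '' (G.induce A).neighborSet v = G.neighborSet v ∩ A := by
  ext w
  constructor
  · rintro ⟨w, hw, rfl⟩
    exact ⟨hw, w.2⟩
  · rintro ⟨hw, hwA⟩
    exact ⟨⟨w, hwA⟩, hw, rfl⟩

lemma isCutVertex_induce_iff {A : Set V} {x : A} :
    IsCutVertex (G.induce A) x ↔
      (G.induce A).Connected ∧ ¬ (G.induce (A \ {x.1})).Connected := by
  rw [IsCutVertex, ← Set.compl_singleton_eq x, connected_induce_induce_iff,
    Set.image_val_compl, Set.image_singleton]

lemma Reachable.exists_isPath_induce {s : Set V} {u v : s} (h : (G.induce s).Reachable u v) :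
    ∃ p : G.Walk u v, p.IsPath ∧ ∀ z ∈ p.support, z ∈ s := by
  classical
  obtain ⟨q⟩ := h
  have hsupp : ∀ z ∈ (q.bypass.map (Embedding.induce s).toHom).support, z ∈ s := by
    simp only [Walk.support_map, List.mem_map]
    rintro _ ⟨z, -, rfl⟩
    exact z.2
  exact ⟨_, q.bypass_isPath.map Subtype.val_injective, hsupp⟩

def IsNonseparableSet (G : SimpleGraph V) (A : Set V) : Prop :=
  (G.induce A).Connected ∧ ∀ x ∈ A, (G.induce (A \ {x})).Connected

lemma isNonseparableSet_iff {A : Set V} :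
    G.IsNonseparableSet A ↔ (G.induce A).Connected ∧ ∀ x, ¬ IsCutVertex (G.induce A) x := by
  simp only [IsNonseparableSet, isCutVertex_induce_iff, not_and, not_not, Subtype.forall]
  exact ⟨fun h => ⟨h.1, fun x hx _ => h.2 x hx⟩, fun h => ⟨h.1, fun x hx => h.2 x hx h.1⟩⟩

lemma isBlock_iff_maximal {B : Set V} : IsBlock G B ↔ Maximal G.IsNonseparableSet B := by
  simp only [IsBlock, Maximal, isNonseparableSet_iff]
  exact ⟨fun h => ⟨⟨h.1, h.2.1⟩, fun C hC hBC => (h.2.2 C hBC hC.1 hC.2).ge⟩,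
    fun h => ⟨h.1.1, h.1.2, fun C hBC hC hC' => hBC.antisymm (h.2 ⟨hC, hC'⟩ hBC)⟩⟩

lemma IsNonseparableSet.connected_induce_diff {A : Set V} (hA : G.IsNonseparableSet A)
    (x : V) : (G.induce (A \ {x})).Connected := by
  by_cases hx : x ∈ A
  · exact hA.2 x hx
  · rw [Set.sdiff_singleton_eq_self hx]
    exact hA.1

lemma isNonseparableSet_pair {u v : V} (h : G.Adj u v) : G.IsNonseparableSet {u, v} := by
  refine ⟨induce_pair_connected_of_adj h, fun x hx => ?_⟩
  obtain ⟨w, hw⟩ : ∃ w, ({u, v} : Set V) \ {x} = {w} := by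
    rcases hx with rfl | rfl
    · exact ⟨v, by simp [h.ne.symm]⟩
    · exact ⟨u, by simp [h.ne]⟩
  rw [hw]
  simp

lemma connected_induce_union_of_forall_exists_walk {s t : Set V} (hs : (G.induce s).Connected)
    (ht : ∀ v ∈ t, ∃ u ∈ s, ∃ p : G.Walk v u, ∀ z ∈ p.support, z ∈ s ∪ t) :
    (G.induce (s ∪ t)).Connected := by
  obtain ⟨⟨u₀, hu₀⟩⟩ := hs.nonempty
  refine induce_connected_of_patches u₀ (Or.inl hu₀) fun {v} hv => ?_
  rcases hv with hv | hv
  · exact ⟨s, Set.subset_union_left, hu₀, hv, hs.preconnected _ _⟩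
  · obtain ⟨u, hu, p, hp⟩ := ht v hv
    have hconn := induce_union_connected hs.preconnected p.connected_induce_support.preconnected
      ⟨u, hu, p.end_mem_support⟩
    exact ⟨s ∪ {z | z ∈ p.support}, Set.union_subset Set.subset_union_left hp, Or.inl hu₀,
      Or.inr p.start_mem_support, hconn.preconnected _ _⟩

lemma Walk.IsPath.exists_walk_to_endpoint_avoiding {a b : V} {p : G.Walk a b} (hp : p.IsPath)
    {x y : V} (hy : y ∈ p.support) (hyx : y ≠ x) :
    ∃ e, (e = a ∨ e = b) ∧ ∃ q : G.Walk y e, x ∉ q.support ∧ q.support ⊆ p.support := by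
  classical
  induction p with
  | nil =>
    rw [Walk.support_nil, List.mem_singleton] at hy
    subst hy
    exact ⟨y, Or.inl rfl, .nil, by simpa using hyx.symm, fun _ hz => hz⟩
  | @cons a a' b h p ih =>
    rw [Walk.cons_isPath_iff] at hp
    rw [Walk.support_cons, List.mem_cons] at hy
    rcases hy with rfl | hy
    · exact ⟨y, Or.inl rfl, .nil, by simpa using hyx.symm, by simp⟩
    obtain ⟨e, rfl | rfl, q, hxq, hqp⟩ := ih hp.1 hy
    · by_cases hax : a = x
      · subst hax
        refine ⟨b, Or.inr rfl, p.dropUntil y hy, fun hx => hp.2 ?_, ?_⟩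
        · exact p.support_dropUntil_subset_support hy hx
        · exact List.Subset.trans (p.support_dropUntil_subset_support hy)
            (List.subset_cons_self _ _)
      · refine ⟨a, Or.inl rfl, q.concat h.symm, ?_, ?_⟩
        · simp [Walk.support_concat, hxq, Ne.symm hax]
        · simpa [Walk.support_concat] using List.Subset.trans hqp (List.subset_cons_self _ _)
    · exact ⟨_, Or.inr rfl, q, hxq, List.Subset.trans hqp (List.subset_cons_self _ _)⟩

lemma IsNonseparableSet.union_support {A : Set V} (hA : G.IsNonseparableSet A) {a b : V}
    {p : G.Walk a b} (hp : p.IsPath) (ha : a ∈ A) (hb : b ∈ A) :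
    G.IsNonseparableSet (A ∪ {z | z ∈ p.support}) := by
  refine ⟨induce_union_connected hA.1.preconnected p.connected_induce_support.preconnected
    ⟨a, ha, p.start_mem_support⟩, fun x _ => ?_⟩
  rw [Set.union_sdiff_distrib]
  refine connected_induce_union_of_forall_exists_walk (hA.connected_induce_diff x) ?_
  rintro y ⟨hy, hyx⟩
  obtain ⟨e, he, q, hxq, hqp⟩ := hp.exists_walk_to_endpoint_avoiding hy hyx
  have heA : e ∈ A := by rcases he with rfl | rfl <;> assumption
  have hex : e ≠ x := fun h => hxq (h ▸ q.end_mem_support)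
  exact ⟨e, ⟨heA, hex⟩, q, fun z hz => Or.inr ⟨hqp hz, fun h => hxq (h ▸ hz)⟩⟩

lemma connected_induce_ne_of_not_isCutVertex {c : V} (hG : G.Connected)
    (hc : ¬ IsCutVertex G c) : (G.induce {v | v ≠ c}).Connected :=
  not_not.1 fun h => hc ⟨hG, h⟩

lemma exists_adj_of_not_isCutVertex {c : V} (hG : G.Connected) (hc : ¬ IsCutVertex G c) :
    ∃ u, G.Adj c u := by
  obtain ⟨⟨v, hv⟩⟩ := (connected_induce_ne_of_not_isCutVertex hG hc).nonempty
  obtain ⟨p⟩ := hG.preconnected c v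
  exact ⟨p.snd, p.adj_snd (Walk.not_nil_of_ne (Ne.symm hv))⟩

lemma exists_isBlock_neighborSet_subset [Finite V] {c : V} (hG : G.Connected)
    (hc : ¬ IsCutVertex G c) : ∃ B, IsBlock G B ∧ c ∈ B ∧ G.neighborSet c ⊆ B := by
  obtain ⟨u₀, hu₀⟩ := exists_adj_of_not_isCutVertex hG hc
  obtain ⟨B, hcu₀B, hB⟩ := Finite.exists_le_maximal (isNonseparableSet_pair hu₀)
  have hcB : c ∈ B := hcu₀B (Set.mem_insert c _)
  refine ⟨B, isBlock_iff_maximal.2 hB, hcB, fun u hu => ?_⟩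
  -- `u₀` and `u` are joined in `G - c`, which closes a cycle through `c`
  obtain ⟨p, hp, hpc⟩ := ((connected_induce_ne_of_not_isCutVertex hG hc).preconnected
    ⟨u₀, hu₀.ne.symm⟩ ⟨u, (G.ne_of_adj hu).symm⟩).exists_isPath_induce
  have hear := hB.1.union_support (hp.concat (fun h => hpc _ h rfl) hu.symm)
    (hcu₀B (Set.mem_insert_of_mem c rfl)) hcB
  exact hB.2 hear Set.subset_union_left (Or.inr (by simp [Walk.support_concat]))

lemma connected_induce_insert_of_forall_adj {x : V} {s : Set V} (h : ∀ v ∈ s, G.Adj x v) :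
    (G.induce (insert x s)).Connected := by
  refine induce_connected_of_patches x (Set.mem_insert x s) fun {v} hv => ?_
  rcases hv with rfl | hv
  · exact ⟨_, subset_rfl, Set.mem_insert v s, Set.mem_insert v s, Reachable.refl _⟩
  · exact ⟨{x, v}, Set.insert_subset_insert (Set.singleton_subset_iff.2 hv), Set.mem_insert x _,
      Set.mem_insert_of_mem x rfl, (induce_pair_connected_of_adj (h v hv)).preconnected _ _⟩

lemma connected_induce_insert_neighborSet_inter {S : Set V} (hS : IsVC G S)
    (hN : ∀ c ∉ S, (G.induce (G.neighborSet c)).Connected) (x : V) :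
    (G.induce (insert x (G.neighborSet x) ∩ S)).Connected := by
  by_cases hx : x ∈ S
  · rw [Set.insert_inter_of_mem hx]
    exact connected_induce_insert_of_forall_adj fun v hv => hv.1
  · have hNx : insert x (G.neighborSet x) ∩ S = G.neighborSet x := by
      ext v
      refine ⟨fun ⟨hv, hvS⟩ => hv.resolve_left (by rintro rfl; exact hx hvS), fun hv => ?_⟩
      exact ⟨Or.inr hv, (hS hv).resolve_left hx⟩
    rw [hNx]
    exact hN x hx

lemma exists_connected_induce_of_walk {S : Set V} (hS : IsVC G S)
    (hN : ∀ c ∉ S, (G.induce (G.neighborSet c)).Connected) {x y : V} (p : G.Walk x y)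
    (hy : y ∈ S) :
    ∃ T ⊆ S, (G.induce T).Connected ∧ insert x (G.neighborSet x) ∩ S ⊆ T ∧ y ∈ T := by
  induction p with
  | nil =>
    exact ⟨_, Set.inter_subset_right, connected_induce_insert_neighborSet_inter hS hN _,
      subset_rfl, Set.mem_insert _ _, hy⟩
  | @cons x x' y h p ih =>
    obtain ⟨T, hTS, hT, hx'T, hyT⟩ := ih hy
    -- the neighbourhoods of `x` and `x'` in `S` meet, in whichever of `x`, `x'` lies in `S`
    have hmeet : (insert x (G.neighborSet x) ∩ S ∩ T).Nonempty := by
      rcases hS h with hxS | hx'S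
      · exact ⟨x, ⟨Set.mem_insert _ _, hxS⟩, hx'T ⟨Or.inr h.symm, hxS⟩⟩
      · exact ⟨x', ⟨Or.inr h, hx'S⟩, hx'T ⟨Set.mem_insert _ _, hx'S⟩⟩
    exact ⟨_ ∪ T, Set.union_subset Set.inter_subset_right hTS,
      induce_union_connected (connected_induce_insert_neighborSet_inter hS hN x).preconnected
        hT.preconnected hmeet, Set.subset_union_left, Or.inr hyT⟩

lemma connected_induce_of_isVC {S : Set V} (hS : IsVC G S)
    (hN : ∀ c ∉ S, (G.induce (G.neighborSet c)).Connected)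
    (hG : G.Connected) : (G.induce S).Connected := by
  obtain ⟨v⟩ := hG.nonempty
  obtain ⟨⟨s₀, -, hs₀⟩⟩ := (connected_induce_insert_neighborSet_inter hS hN v).nonempty
  refine induce_connected_of_patches s₀ hs₀ fun {v} hv => ?_
  obtain ⟨T, hTS, hT, hs₀T, hvT⟩ :=
    exists_connected_induce_of_walk hS hN (hG.preconnected s₀ v).some hv
  exact ⟨T, hTS, hs₀T ⟨Set.mem_insert _ _, hs₀⟩, hvT, hT.preconnected _ _⟩

end SimpleGraph

/-- If every block of a connected graph `G` is locally connected, then every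
vertex cover of `G` containing all cut vertices induces a connected subgraph. -/
theorem vc_with_cutVertices_connected_of_blocks_locally_connected {V : Type*} [Finite V]
    (G : SimpleGraph V) (hconn : G.Connected)
    (hblocks : ∀ Bs : Set V, IsBlock G Bs → LocallyConnected (G.induce Bs)) :
    ∀ S : Set V, IsVC G S → cutVertices G ⊆ S → (G.induce S).Connected := by
  intro S hS hcut
  refine connected_induce_of_isVC hS (fun c hc => ?_) hconn
  obtain ⟨B, hB, hcB, hNB⟩ := exists_isBlock_neighborSet_subset hconn fun h => hc (hcut h)
  have hloc := hblocks B hB ⟨c, hcB⟩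
  rwa [connected_induce_induce_iff, image_val_neighborSet_induce, Set.inter_eq_left.2 hNB]
    at hloc
end

section
/- If G is a locally connected graph, then every vertex cover of G induces a connected subgraph of G. -/
open EVC SimpleGraph

lemma evc_aux {V : Type*} (G : SimpleGraph V) (hlc : LocallyConnected G)
    (S : Set V) (hS : IsVC G S) :
    ∀ n : ℕ, ∀ a b : V, ∀ ha : a ∈ S, ∀ hb : b ∈ S, ∀ p : G.Walk a b,
      p.length = n → (G.induce S).Reachable ⟨a, ha⟩ ⟨b, hb⟩ := by
  intro n
  induction n using Nat.strong_induction_on with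
  | _ n ih =>
    intro a b ha hb p hlen
    cases p with
    | nil => exact SimpleGraph.Reachable.refl _
    | @cons _ w _ hadj q =>
      by_cases hw : w ∈ S
      · have h1 : (G.induce S).Adj ⟨a, ha⟩ ⟨w, hw⟩ := hadj
        have h2 := ih q.length (by simp at hlen; omega) w b hw hb q rfl
        exact (SimpleGraph.Adj.reachable h1).trans h2
      · cases q with
        | nil => exact absurd hb hw
        | @cons _ x _ hadj2 r =>
          have hx : x ∈ S := (hS hadj2).resolve_left hw
          have hN : G.neighborSet w ⊆ S := fun z hz => (hS hz).resolve_left hw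
          have haN : a ∈ G.neighborSet w := hadj.symm
          have hxN : x ∈ G.neighborSet w := hadj2
          have hreach : (G.induce (G.neighborSet w)).Reachable ⟨a, haN⟩ ⟨x, hxN⟩ :=
            (hlc w).preconnected _ _
          let f : G.induce (G.neighborSet w) →g G.induce S :=
            ⟨Set.inclusion hN, fun {p q} h => h⟩
          have h1 : (G.induce S).Reachable ⟨a, ha⟩ ⟨x, hx⟩ := hreach.map f
          have h2 := ih r.length (by simp at hlen; omega) x b hx hb r rfl
          exact h1.trans h2

/-- In a connected locally connected graph, every vertex cover induces a
connected subgraph. -/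
theorem vc_connected_of_locally_connected {V : Type*} [Finite V] (G : SimpleGraph V)
    (hconn : G.Connected) (hlc : LocallyConnected G) :
    ∀ S : Set V, IsVC G S → (G.induce S).Connected := by
  intro S hS
  have hne : Nonempty V := hconn.nonempty
  obtain ⟨v⟩ := hne
  obtain ⟨⟨u, hu⟩⟩ := (hlc v).nonempty
  have hSne : S.Nonempty := by
    rcases hS hu with h | h
    · exact ⟨v, h⟩
    · exact ⟨u, h⟩
  have : Nonempty ↥S := ⟨⟨hSne.choose, hSne.choose_spec⟩⟩
  constructor
  rintro ⟨a, ha⟩ ⟨b, hb⟩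
  obtain ⟨p⟩ := hconn a b
  exact evc_aux G hlc S hS p.length a b ha hb p rfl
end

section
/- Every biconnected chordal graph is locally connected. -/
open EVC SimpleGraph

/-- `G` is chordal: every cycle of length at least 4 has a chord. -/
def IsChordal {V : Type*} (G : SimpleGraph V) : Prop :=
  ∀ (u : V) (w : G.Walk u u), w.IsCycle → 4 ≤ w.length →
    ∃ a ∈ w.support, ∃ b ∈ w.support, G.Adj a b ∧ s(a, b) ∉ w.edges

/-- `G` is biconnected: connected, at least 3 vertices, no cut vertex. -/
def IsBiconnected {V : Type*} (G : SimpleGraph V) : Prop :=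
  G.Connected ∧ 3 ≤ Nat.card V ∧ ∀ x : V, ¬ IsCutVertex G x

/-!
Suppose two neighbours `a`, `b` of `v` lie in different components of `G[N(v)]`. As `v` is not
a cut vertex, they are joined by a path avoiding `v`; choose such a pair and path with the path
as short as possible. Minimality makes the path chordless and forces it to meet `N(v)` only at its
ends, so closing it up through `v` gives a chordless cycle of length at least 4.
-/

namespace SimpleGraph.Walk

variable {V : Type*} {G : SimpleGraph V}

theorem exists_length_lt_of_adj_of_mem_support [DecidableEq V] {u w y : V} {p : G.Walk u w}
    (hy : y ∈ p.support) (h : G.Adj u y) (he : s(u, y) ∉ p.edges) :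
    ∃ q : G.Walk u w, q.length < p.length ∧ q.support ⊆ p.support := by
  cases p with
  | nil => exact absurd (List.mem_singleton.mp hy) h.ne'
  | @cons _ u₁ _ h₁ p =>
    rcases List.mem_cons.mp hy with rfl | hy
    · exact absurd rfl h.ne
    have hne : y ≠ u₁ := by
      rintro rfl
      exact he (by simp)
    refine ⟨cons h (p.dropUntil y hy), ?_, ?_⟩
    · simpa using length_dropUntil_lt_length hy hne
    · simpa using List.cons_subset_cons _ (p.support_dropUntil_subset_support hy)

theorem exists_length_lt_of_isChord [DecidableEq V] {u w x y : V} {p : G.Walk u w}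
    (h : p.IsChord s(x, y)) :
    ∃ q : G.Walk u w, q.length < p.length ∧ q.support ⊆ p.support := by
  induction p with
  | nil =>
    obtain ⟨hxy, -, hx, hy⟩ := isChord_sym2Mk.mp h
    simp only [support_nil, List.mem_singleton] at hx hy
    exact absurd (hx.trans hy.symm) hxy.ne
  | @cons u u₁ w h₁ p ih =>
    obtain ⟨hxy, he, hx, hy⟩ := isChord_sym2Mk.mp h
    rcases List.mem_cons.mp hx with rfl | hx'
    · exact exists_length_lt_of_adj_of_mem_support hy hxy he
    rcases List.mem_cons.mp hy with rfl | hy'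
    · exact exists_length_lt_of_adj_of_mem_support hx hxy.symm (Sym2.eq_swap ▸ he)
    obtain ⟨q, hlt, hsub⟩ :=
      ih (isChord_sym2Mk.mpr ⟨hxy, fun h => he (by simp [h]), hx', hy'⟩)
    exact ⟨cons h₁ q, by simpa using hlt, by simpa using List.cons_subset_cons _ hsub⟩

variable {a b v : V}

theorem IsPath.cons_concat_isCycle {p : G.Walk a b} (hp : p.IsPath) (hv : v ∉ p.support)
    (hab : a ≠ b) (ha : G.Adj v a) (hb : G.Adj b v) : (cons ha (p.concat hb)).IsCycle := by
  refine (cons_isCycle_iff _ ha).mpr ⟨hp.concat hv hb, ?_⟩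
  rw [edges_concat, List.concat_eq_append, List.mem_append, List.mem_singleton, Sym2.eq_iff]
  rintro (he | ⟨rfl, -⟩ | ⟨-, rfl⟩)
  · exact hv (p.fst_mem_support_of_mem_edges he)
  · exact hb.ne rfl
  · exact hab rfl

theorem IsChordless.cons_concat {p : G.Walk a b} (hp : p.IsChordless) (ha : G.Adj v a)
    (hb : G.Adj b v) (hends : ∀ z ∈ p.support, G.Adj v z → z = a ∨ z = b) :
    (cons ha (p.concat hb)).IsChordless := by
  have hv : ∀ z ∈ p.support, G.Adj v z → s(v, z) ∈ (cons ha (p.concat hb)).edges := by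
    intro z hz hvz
    rcases hends z hz hvz with rfl | rfl <;> simp [Sym2.eq_swap]
  have hsupp : ∀ z ∈ (cons ha (p.concat hb)).support, z = v ∨ z ∈ p.support := by
    simp only [support_cons, support_concat, List.mem_cons, List.mem_append, List.not_mem_nil]
    tauto
  rw [isChordless_iff_forall_mem_edges]
  intro x y hx hy hxy
  rcases hsupp x hx with rfl | hx' <;> rcases hsupp y hy with rfl | hy'
  · exact absurd rfl hxy.ne
  · exact hv y hy' hxy
  · exact Sym2.eq_swap ▸ hv x hx' hxy.symm
  · simp [hp.mem_edges hx' hy' hxy]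

end SimpleGraph.Walk

section

variable {V : Type*} {G : SimpleGraph V}

theorem IsChordal.not_isChordless (hG : IsChordal G) {u : V} {c : G.Walk u u} (hc : c.IsCycle)
    (hlen : 4 ≤ c.length) : ¬ c.IsChordless := by
  obtain ⟨x, hx, y, hy, hxy, he⟩ := hG u c hc hlen
  exact fun h => he (h.mem_edges hx hy hxy)

theorem IsChordal.reachable_induce_neighborSet [DecidableEq V] (hG : IsChordal G) {v : V}
    {a b : G.neighborSet v} (p : G.Walk a b) (hp : p.IsPath) (hv : v ∉ p.support) :
    (G.induce (G.neighborSet v)).Reachable a b := by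
  induction hn : p.length using Nat.strong_induction_on generalizing a b with
  | _ n ih =>
  subst hn
  by_contra hab
  have hends : ∀ z ∈ p.support, G.Adj v z → z = a ∨ z = b := by
    intro z hz hvz
    by_contra! hne
    have haz := ih _ (Walk.length_takeUntil_lt_length hz hne.2) (b := ⟨z, hvz⟩)
      (p.takeUntil z hz) (hp.takeUntil hz)
      (fun h => hv (p.support_takeUntil_subset_support hz h)) rfl
    have hzb := ih _ (Walk.length_dropUntil_lt_length hz hne.1) (a := ⟨z, hvz⟩)
      (p.dropUntil z hz) (hp.dropUntil hz)
      (fun h => hv (p.support_dropUntil_subset_support hz h)) rfl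
    exact hab (haz.trans hzb)
  have hchordless : p.IsChordless := by
    intro e he
    induction e using Sym2.ind
    obtain ⟨q, hlt, hsub⟩ := Walk.exists_length_lt_of_isChord he
    exact hab (ih _ (q.length_bypass_le_length.trans_lt hlt) q.bypass q.bypass_isPath
      (fun h => hv (hsub (q.support_bypass_subset_support h))) rfl)
  have hne : (a : V) ≠ b := fun h => hab (Subtype.ext h ▸ .rfl)
  have hnadj : ¬ G.Adj a b := fun h => hab (show (G.induce _).Adj a b from h).reachable
  have hlen : 2 ≤ p.length := by
    by_contra! h
    interval_cases hl : p.length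
    · exact hne (Walk.eq_of_length_eq_zero hl)
    · exact hnadj (Walk.adj_of_length_eq_one hl)
  have hva : G.Adj v a := a.2
  have hbv : G.Adj b v := b.2.symm
  refine hG.not_isChordless (hp.cons_concat_isCycle hv hne hva hbv) ?_
    (hchordless.cons_concat hva hbv hends)
  rw [Walk.length_cons, Walk.length_concat]
  omega

theorem exists_isPath_not_mem_support_of_not_isCutVertex (hconn : G.Connected) {v : V}
    (hv : ¬ IsCutVertex G v) {a b : V} (ha : a ≠ v) (hb : b ≠ v) :
    ∃ p : G.Walk a b, p.IsPath ∧ v ∉ p.support := by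
  have hconn' : (G.induce {w | w ≠ v}).Connected := not_not.mp fun h => hv ⟨hconn, h⟩
  obtain ⟨p, hp⟩ := hconn'.exists_isPath ⟨a, ha⟩ ⟨b, hb⟩
  refine ⟨p.map (Embedding.induce _).toHom, hp.map Subtype.val_injective, fun h => ?_⟩
  obtain ⟨w, -, hw⟩ := List.mem_map.mp ((p.support_map (Embedding.induce _).toHom) ▸ h)
  exact w.2 hw

end

theorem locallyConnected_of_biconnected_chordal_general {V : Type*}
    (G : SimpleGraph V) (hbc : IsBiconnected G) (hch : IsChordal G) :
    LocallyConnected G := by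
  classical
  obtain ⟨hconn, hcard, hcut⟩ := hbc
  have : Finite V := Nat.finite_of_card_ne_zero (by omega)
  have : Nontrivial V := Finite.one_lt_card_iff_nontrivial.mp (by omega)
  intro v
  obtain ⟨u, hu⟩ := hconn.preconnected.exists_adj_of_nontrivial v
  have : Nonempty (G.neighborSet v) := ⟨⟨u, hu⟩⟩
  refine ⟨fun a b => ?_⟩
  obtain ⟨p, hp, hv⟩ :=
    exists_isPath_not_mem_support_of_not_isCutVertex hconn (hcut v) a.2.ne' b.2.ne'
  exact hch.reachable_induce_neighborSet p hp hv

/-- Every biconnected chordal graph is locally connected. -/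
theorem locallyConnected_of_biconnected_chordal {V : Type*} [Finite V]
    (G : SimpleGraph V) (hbc : IsBiconnected G) (hch : IsChordal G) :
    LocallyConnected G :=
  locallyConnected_of_biconnected_chordal_general G hbc hch
end

section
/- For every locally connected connected graph G, evc(G) ∈ {mvc(G), mvc(G)+1}. -/
/-! Every configuration is a vertex cover, so `mvc G ≤ evc G`. Conversely, in a locally connected
graph a minimum vertex cover `S` induces a connected subgraph, and `|S| + 1` guards suffice: the
guards of `S` plus a spare one. An attack from `u ∈ S` towards an unoccupied `v` is answered by
moving the guard of `u` to `v` while every guard on a path inside the occupied vertices from the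
spare guard to `u` moves one step forward; the new configuration is again `S` plus a spare guard. -/

namespace EVC

open SimpleGraph

variable {V : Type*} {G : SimpleGraph V} {S T : Set V} {u v : V}

theorem IsVC.mono (hS : IsVC G S) (hST : S ⊆ T) : IsVC G T :=
  fun _ _ huv => (hS huv).imp (@hST _) (@hST _)

theorem IsVC.neighborSet_subset (hS : IsVC G S) {c : V} (hc : c ∉ S) : G.neighborSet c ⊆ S :=
  fun _ hw => (hS hw).resolve_left hc

/-- Along any walk, a vertex outside the cover `S` has its whole neighbourhood in `S`, and local
connectivity joins the two neighbours of it on the walk inside `S`. -/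
theorem IsVC.induce_preconnected (hlc : LocallyConnected G) (hG : G.Preconnected)
    (hS : IsVC G S) : (G.induce S).Preconnected := by
  suffices key : ∀ {c b : V} (_ : G.Walk c b) (hb : b ∈ S) (a : V) (ha : a ∈ S),
      a = c ∨ G.Adj a c → (G.induce S).Reachable ⟨a, ha⟩ ⟨b, hb⟩ by
    rintro ⟨a, ha⟩ ⟨b, hb⟩
    obtain ⟨p⟩ := hG a b
    exact key p hb a ha (.inl rfl)
  intro c b p
  induction p with
  | nil =>
    rintro hb a ha (rfl | hab)
    · rfl
    · exact Adj.reachable (G := G.induce S) hab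
  | @cons c d b hcd q ih =>
    intro hb a ha hac
    by_cases hc : c ∈ S
    · have hreach : (G.induce S).Reachable ⟨a, ha⟩ ⟨c, hc⟩ := by
        rcases hac with rfl | hac
        · rfl
        · exact Adj.reachable (G := G.induce S) hac
      exact hreach.trans (ih hb c hc (.inr hcd))
    · have had : G.Adj a c := hac.resolve_left (ne_of_mem_of_not_mem ha hc)
      have hd : d ∈ S := (hS hcd).resolve_left hc
      have hlocal : (G.induce (G.neighborSet c)).Reachable ⟨a, had.symm⟩ ⟨d, hcd⟩ :=
        (hlc c).preconnected _ _
      exact (hlocal.map (induceHomOfLE G (hS.neighborSet_subset hc)).toHom).trans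
        (ih hb d hd (.inl rfl))

theorem exists_isPath_of_induce_preconnected (hS : (G.induce S).Preconnected) {a b : V}
    (ha : a ∈ S) (hb : b ∈ S) : ∃ p : G.Walk a b, p.IsPath ∧ ∀ w ∈ p.support, w ∈ S := by
  classical
  obtain ⟨r⟩ := hS ⟨a, ha⟩ ⟨b, hb⟩
  let ι := Embedding.induce (G := G) S
  have hsupport : ∀ w ∈ (r.bypass.map ι.toHom).support, w ∈ S := by
    intro w hw
    rw [Walk.support_map] at hw
    obtain ⟨w, -, rfl⟩ := List.mem_map.1 hw
    exact w.2
  exact ⟨r.bypass.map ι.toHom, r.bypass_isPath.map ι.injective, hsupport⟩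

theorem Defends.symm {S' : Set V} (h : Defends G S S' u v) : Defends G S S' v u := by
  obtain ⟨f, hbij, hmove, hattack⟩ := h
  exact ⟨f, hbij, hmove, hattack.symm⟩

theorem defends_self (hu : u ∈ S) (hv : v ∈ S) (huv : G.Adj u v) : Defends G S S u v := by
  classical
  refine ⟨Equiv.swap u v, Equiv.bijOn_swap hu hv, fun w _ => ?_,
    .inl ⟨hu, Equiv.swap_apply_left u v⟩⟩
  rw [Equiv.swap_apply_def]
  split_ifs with hwu hwv
  · exact .inr (hwu ▸ huv)
  · exact .inr (hwv ▸ huv.symm)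
  · exact .inl rfl

theorem exists_bijOn_shift_along_path {x u v : V} {T : Set V} (hv : v ∉ T) (huv : G.Adj u v)
    (p : G.Walk x u) (hp : p.IsPath) (hpT : ∀ w ∈ p.support, w ∈ T) :
    ∃ f : V → V, Set.BijOn f T (insert v (T \ {x})) ∧
      (∀ w ∈ T, f w = w ∨ G.Adj w (f w)) ∧ f u = v := by
  classical
  induction p generalizing T with
  | @nil x =>
    have hxT : x ∈ T := hpT x (by simp)
    refine ⟨Function.update id x v, ?_, fun w _ => ?_, by simp⟩
    · have h := ((Set.bijOn_id (T \ {x})).congr (fun w hw =>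
        (Function.update_of_ne hw.2 v id).symm)).insert (a := x) (by simp [hv])
      rwa [Function.update_self, Set.insert_sdiff_self_of_mem hxT] at h
    · rcases eq_or_ne w x with rfl | hwx
      · exact .inr (by simpa using huv)
      · exact .inl (Function.update_of_ne hwx v id)
  | @cons x x' u hxx' q ih =>
    rw [Walk.cons_isPath_iff] at hp
    have hxT : x ∈ T := hpT x (by simp)
    have hqT : ∀ w ∈ q.support, w ∈ T \ {x} := fun w hw =>
      ⟨hpT w (by simp [hw]), fun h => hp.2 (h ▸ hw)⟩
    have hx'T : x' ∈ T \ {x} := hqT x' q.start_mem_support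
    obtain ⟨f, hbij, hmove, hfu⟩ := ih (fun h => hv h.1) huv hp.1 hqT
    refine ⟨Function.update f x x', ?_, fun w hw => ?_, ?_⟩
    · have h := (hbij.congr (fun w hw => (Function.update_of_ne hw.2 x' f).symm)).insert
        (a := x) (by simp [ne_of_mem_of_not_mem hx'T.1 hv])
      rwa [Function.update_self, Set.insert_sdiff_self_of_mem hxT, Set.insert_comm,
        Set.insert_sdiff_self_of_mem hx'T] at h
    · rcases eq_or_ne w x with rfl | hwx
      · exact .inr (by simpa using hxx')
      · rw [Function.update_of_ne hwx]
        exact hmove w ⟨hw, hwx⟩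
    · rw [Function.update_of_ne (ne_of_mem_of_not_mem q.end_mem_support hp.2), hfu]

theorem defends_insert_insert (hG : G.Preconnected) (hS : IsVC G S)
    (hSc : (G.induce S).Preconnected) {y : V} (hy : y ∉ S) (hv : v ∉ insert y S)
    (huv : G.Adj u v) : Defends G (insert y S) (insert v S) u v := by
  have hu : u ∈ S := (hS huv).resolve_right (fun h => hv (Set.mem_insert_of_mem y h))
  obtain ⟨w, hyw⟩ : ∃ w, G.Adj y w := by
    obtain ⟨p⟩ := hG y u
    cases p with
    | nil => exact absurd hu hy
    | cons hyw _ => exact ⟨_, hyw⟩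
  have hw : w ∈ S := (hS hyw).resolve_left hy
  obtain ⟨q, hq, hqS⟩ := exists_isPath_of_induce_preconnected hSc hw hu
  have hpath : (Walk.cons hyw q).IsPath := hq.cons (fun h => hy (hqS y h))
  have hsupport : ∀ z ∈ (Walk.cons hyw q).support, z ∈ insert y S := by
    simpa [Walk.support_cons] using fun z hz => Or.inr (hqS z hz)
  obtain ⟨f, hbij, hmove, hfu⟩ := exists_bijOn_shift_along_path hv huv _ hpath hsupport
  rw [Set.insert_sdiff_self_of_notMem hy] at hbij
  exact ⟨f, hbij, hmove, .inl ⟨Set.mem_insert_of_mem y hu, hfu⟩⟩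

theorem isEvcClassOn_insert (hG : G.Preconnected) (hS : IsVC G S)
    (hSc : (G.induce S).Preconnected) (hfin : S.Finite) {x : V} (hx : x ∉ S) :
    IsEvcClassOn G ∅ (S.ncard + 1) {T | ∃ y ∉ S, T = insert y S} := by
  refine ⟨⟨_, x, hx, rfl⟩, ?_, ?_⟩
  · rintro _ ⟨y, hy, rfl⟩
    exact ⟨hS.mono (Set.subset_insert y S), Set.empty_subset _,
      Set.ncard_insert_of_notMem hy hfin⟩
  · rintro _ ⟨y, hy, rfl⟩ u v huv
    by_cases hu : u ∈ insert y S
    · by_cases hv : v ∈ insert y S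
      · exact ⟨_, ⟨y, hy, rfl⟩, defends_self hu hv huv⟩
      · exact ⟨_, ⟨v, fun h => hv (Set.mem_insert_of_mem y h), rfl⟩,
          defends_insert_insert hG hS hSc hy hv huv⟩
    · exact ⟨_, ⟨u, fun h => hu (Set.mem_insert_of_mem y h), rfl⟩,
        (defends_insert_insert hG hS hSc hy hu huv.symm).symm⟩

theorem isEvcClassOn_univ [Finite V] : IsEvcClassOn G ∅ (Nat.card V) {Set.univ} := by
  refine ⟨⟨_, rfl⟩, ?_, ?_⟩
  · rintro _ rfl
    exact ⟨fun u _ _ => .inl (Set.mem_univ u), Set.empty_subset _, Set.ncard_univ V⟩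
  · rintro _ rfl u v huv
    exact ⟨_, rfl, defends_self (Set.mem_univ u) (Set.mem_univ v) huv⟩

theorem evc_le_of_isEvcClassOn {k : ℕ} {C : Set (Set V)} (h : IsEvcClassOn G ∅ k C) :
    evc G ≤ k :=
  Nat.sInf_le ⟨C, h⟩

theorem mvc_le_evc [Finite V] : mvc G ≤ evc G := by
  obtain ⟨C, hC⟩ : evc G ∈ {k | ∃ C : Set (Set V), IsEvcClassOn G ∅ k C} :=
    Nat.sInf_mem ⟨Nat.card V, _, isEvcClassOn_univ⟩
  obtain ⟨S, hSC⟩ := hC.1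
  obtain ⟨hS, -, hcard⟩ := hC.2.1 S hSC
  exact Nat.sInf_le ⟨S, hS, hcard⟩

theorem exists_isVC_ncard_eq_mvc : ∃ S, IsVC G S ∧ S.ncard = mvc G :=
  Nat.sInf_mem (s := {k | ∃ S : Set V, IsVC G S ∧ S.ncard = k})
    ⟨_, Set.univ, fun u _ _ => .inl (Set.mem_univ u), rfl⟩

theorem evc_le_ncard_add_one [Finite V] (hG : G.Preconnected) (hS : IsVC G S)
    (hSc : (G.induce S).Preconnected) : evc G ≤ S.ncard + 1 := by
  by_cases hSuniv : S = Set.univ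
  · calc evc G ≤ Nat.card V := evc_le_of_isEvcClassOn isEvcClassOn_univ
      _ = S.ncard := by rw [hSuniv, Set.ncard_univ]
      _ ≤ S.ncard + 1 := Nat.le_succ _
  · obtain ⟨x, hx⟩ := (Set.ne_univ_iff_exists_notMem S).1 hSuniv
    exact evc_le_of_isEvcClassOn (isEvcClassOn_insert hG hS hSc S.toFinite hx)

end EVC

open EVC SimpleGraph

/-- For a connected locally connected graph `G`,
`evc G ∈ {mvc G, mvc G + 1}`. -/
theorem evc_eq_mvc_or_mvc_succ_of_locally_connected {V : Type*} [Finite V]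
    (G : SimpleGraph V) (hconn : G.Connected) (hlc : LocallyConnected G) :
    evc G = mvc G ∨ evc G = mvc G + 1 := by
  obtain ⟨S, hS, hcard⟩ := exists_isVC_ncard_eq_mvc (G := G)
  have hSc := hS.induce_preconnected hlc hconn.preconnected
  have hupper : evc G ≤ mvc G + 1 := hcard ▸ evc_le_ncard_add_one hconn.preconnected hS hSc
  have hlower : mvc G ≤ evc G := mvc_le_evc
  omega
end

section
/- Let G be a connected graph with a cut vertex x, let H be a connected component of G − x, H₁ the subgraph induced on V(H) ∪ {x}, and H₂ the subgraph induced on V(G) \ V(H). Then mvc(G) equals either mvc(H₁) + mvc(H₂) − 1 or mvc(H₁) + mvc(H₂). -/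
open EVC SimpleGraph

section Aux

variable {V : Type*} [Finite V]

lemma mvc_le_of_isVC (G : SimpleGraph V) {S : Set V} (h : IsVC G S) : mvc G ≤ S.ncard :=
  Nat.sInf_le ⟨S, h, rfl⟩

lemma exists_min_vc (G : SimpleGraph V) : ∃ S : Set V, IsVC G S ∧ S.ncard = mvc G := by
  have hne : {k | ∃ S : Set V, IsVC G S ∧ S.ncard = k}.Nonempty :=
    ⟨(Set.univ : Set V).ncard, Set.univ, fun u v _ => Or.inl (Set.mem_univ u), rfl⟩
  exact Nat.sInf_mem hne

lemma mvc_induce_le (G : SimpleGraph V) (A : Set V) (T : Set V)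
    (h : ∀ ⦃u v : V⦄, u ∈ A → v ∈ A → G.Adj u v → u ∈ T ∨ v ∈ T) :
    mvc (G.induce A) ≤ (T ∩ A).ncard := by
  have hvc : IsVC (G.induce A) {a : A | (a : V) ∈ T} := by
    intro u v huv
    have hadj : G.Adj (u : V) (v : V) := huv
    rcases h u.2 v.2 hadj with h' | h'
    · exact Or.inl h'
    · exact Or.inr h'
  refine le_trans (mvc_le_of_isVC _ hvc) (le_of_eq ?_)
  rw [← Set.ncard_image_of_injective _ (Subtype.val_injective (p := fun v => v ∈ A))]
  congr 1
  ext w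
  simp only [Set.mem_image, Set.mem_setOf_eq, Set.mem_inter_iff]
  constructor
  · rintro ⟨a, ha, rfl⟩; exact ⟨ha, a.2⟩
  · rintro ⟨hT, hA⟩; exact ⟨⟨w, hA⟩, hT, rfl⟩

end Aux

/-- For a cut vertex `x` of a connected graph `G` and a connected component
`H` of `G - x`, with `H₁` induced on `V(H) ∪ {x}` and `H₂` induced on `V(G) \ V(H)`,
`mvc G` equals `mvc H₁ + mvc H₂ - 1` or `mvc H₁ + mvc H₂`. -/
theorem mvc_split_at_cut_vertex {V : Type*} [Finite V] (G : SimpleGraph V)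
    (hconn : G.Connected) (x : V) (hx : IsCutVertex G x)
    (c : (G.induce {v : V | v ≠ x}).ConnectedComponent) :
    mvc G = mvc (G.induce ({v : V | ∃ h : v ≠ x,
        (G.induce {v : V | v ≠ x}).connectedComponentMk ⟨v, h⟩ = c} ∪ {x})) +
      mvc (G.induce {v : V | ∃ h : v ≠ x,
        (G.induce {v : V | v ≠ x}).connectedComponentMk ⟨v, h⟩ = c}ᶜ) - 1 ∨
    mvc G = mvc (G.induce ({v : V | ∃ h : v ≠ x,
        (G.induce {v : V | v ≠ x}).connectedComponentMk ⟨v, h⟩ = c} ∪ {x})) +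
      mvc (G.induce {v : V | ∃ h : v ≠ x,
        (G.induce {v : V | v ≠ x}).connectedComponentMk ⟨v, h⟩ = c}ᶜ) := by
  classical
  set A : Set V := {v : V | ∃ h : v ≠ x,
      (G.induce {v : V | v ≠ x}).connectedComponentMk ⟨v, h⟩ = c} with hA
  set A₁ : Set V := A ∪ {x} with hA₁
  set A₂ : Set V := Aᶜ with hA₂
  have hxA : x ∉ A := by rintro ⟨h, -⟩; exact h rfl
  have hxA₂ : x ∈ A₂ := hxA
  -- every edge lies inside A₁ or inside A₂
  have split : ∀ ⦃u v : V⦄, G.Adj u v →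
      (u ∈ A₁ ∧ v ∈ A₁) ∨ (u ∈ A₂ ∧ v ∈ A₂) := by
    intro u v hadj
    by_cases hu : u = x
    · subst hu
      by_cases hv : v ∈ A
      · exact Or.inl ⟨Or.inr rfl, Or.inl hv⟩
      · exact Or.inr ⟨hxA₂, hv⟩
    · by_cases hv : v = x
      · subst hv
        by_cases hu' : u ∈ A
        · exact Or.inl ⟨Or.inl hu', Or.inr rfl⟩
        · exact Or.inr ⟨hu', hxA₂⟩
      · have hadj' : (G.induce {v : V | v ≠ x}).Adj ⟨u, hu⟩ ⟨v, hv⟩ := hadj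
        have hmk : (G.induce {v : V | v ≠ x}).connectedComponentMk ⟨u, hu⟩ =
            (G.induce {v : V | v ≠ x}).connectedComponentMk ⟨v, hv⟩ :=
          ConnectedComponent.sound hadj'.reachable
        by_cases hu' : u ∈ A
        · obtain ⟨h', hc⟩ := hu'
          have : ((⟨u, h'⟩ : {v : V | v ≠ x}) : {v : V | v ≠ x}) = ⟨u, hu⟩ := rfl
          have hvA : v ∈ A := ⟨hv, by rw [← hmk]; exact hc⟩
          exact Or.inl ⟨Or.inl ⟨h', hc⟩, Or.inl hvA⟩
        · have hv' : v ∉ A := by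
            rintro ⟨h', hc⟩
            exact hu' ⟨hu, by rw [hmk]; exact hc⟩
          exact Or.inr ⟨hu', hv'⟩
  -- upper bound : mvc G ≤ mvc H₁ + mvc H₂
  obtain ⟨S₁, h₁vc, h₁card⟩ := exists_min_vc (G.induce A₁)
  obtain ⟨S₂, h₂vc, h₂card⟩ := exists_min_vc (G.induce A₂)
  set T : Set V := Subtype.val '' S₁ ∪ Subtype.val '' S₂ with hT
  have hTvc : IsVC G T := by
    intro u v hadj
    rcases split hadj with ⟨hu, hv⟩ | ⟨hu, hv⟩
    · have hadj' : (G.induce A₁).Adj ⟨u, hu⟩ ⟨v, hv⟩ := hadj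
      rcases h₁vc hadj' with h | h
      · exact Or.inl (Or.inl ⟨⟨u, hu⟩, h, rfl⟩)
      · exact Or.inr (Or.inl ⟨⟨v, hv⟩, h, rfl⟩)
    · have hadj' : (G.induce A₂).Adj ⟨u, hu⟩ ⟨v, hv⟩ := hadj
      rcases h₂vc hadj' with h | h
      · exact Or.inl (Or.inr ⟨⟨u, hu⟩, h, rfl⟩)
      · exact Or.inr (Or.inr ⟨⟨v, hv⟩, h, rfl⟩)
  have hupper : mvc G ≤ mvc (G.induce A₁) + mvc (G.induce A₂) := by
    refine le_trans (mvc_le_of_isVC _ hTvc) ?_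
    refine le_trans (Set.ncard_union_le _ _) ?_
    rw [Set.ncard_image_of_injective _ Subtype.val_injective,
      Set.ncard_image_of_injective _ Subtype.val_injective, h₁card, h₂card]
  -- lower bound : mvc H₁ + mvc H₂ ≤ mvc G + 1
  obtain ⟨S, hvc, hcard⟩ := exists_min_vc G
  have hb₁ : mvc (G.induce A₁) ≤ (S ∩ A₁).ncard :=
    mvc_induce_le G A₁ S (fun u v _ _ h => hvc h)
  have hb₂ : mvc (G.induce A₂) ≤ (S ∩ A₂).ncard :=
    mvc_induce_le G A₂ S (fun u v _ _ h => hvc h)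
  have hunion : (S ∩ A₁) ∪ (S ∩ A₂) = S := by
    rw [← Set.inter_union_distrib_left]
    have : A₁ ∪ A₂ = Set.univ := by
      rw [hA₁, hA₂]
      ext w
      simp only [Set.mem_union, Set.mem_compl_iff, Set.mem_univ, iff_true]
      by_cases h : w ∈ A
      · exact Or.inl (Or.inl h)
      · exact Or.inr h
    rw [this, Set.inter_univ]
  have hinter : (S ∩ A₁) ∩ (S ∩ A₂) ⊆ {x} := by
    rintro w ⟨⟨-, hw₁⟩, ⟨-, hw₂⟩⟩
    rcases hw₁ with h | h
    · exact absurd h hw₂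
    · exact h
  have hkey : (S ∩ A₁).ncard + (S ∩ A₂).ncard ≤ S.ncard + 1 := by
    have := Set.ncard_union_add_ncard_inter (S ∩ A₁) (S ∩ A₂)
    rw [hunion] at this
    have hle : ((S ∩ A₁) ∩ (S ∩ A₂)).ncard ≤ ({x} : Set V).ncard :=
      Set.ncard_le_ncard hinter (Set.toFinite _)
    rw [Set.ncard_singleton] at hle
    omega
  have hlower : mvc (G.induce A₁) + mvc (G.induce A₂) ≤ mvc G + 1 := by
    calc mvc (G.induce A₁) + mvc (G.induce A₂) ≤ (S ∩ A₁).ncard + (S ∩ A₂).ncard :=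
          Nat.add_le_add hb₁ hb₂
      _ ≤ S.ncard + 1 := hkey
      _ = mvc G + 1 := by rw [hcard]
  omega
end
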